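/- arXiv:2202.07608 — 7 statements merged into one kernel-verified Lean document; each statement's English description precedes it below -/
import Mathlib

section
/- Suppose f_2, f_3, … are functions from the positive integers to the positive integers satisfying: (i) f_2(n) ≤ n for all integers n ≥ 1; (ii) f_d(1) = 1 for all integers d ≥ 2; and (iii) for every integer d ≥ 3 there exists α_d ∈ ℕ such that for every integer n ≥ 8, f_d(n) ≤ α_d · [ f_d(⌈7n/8⌉) + f_{d−1}(2n^(d−1))² · Σ_{u=0}^{⌊log₂ n⌋−3} f_d(2^(u+1)) · f_d(⌈n/2^(u+1)⌉ + 1) ]. Then for every integer d ≥ 2 there exists a constant β_d ∈ ℕ such that f_d(n) ≤ 2^(β_d · (log₂ n)^(d−1)) for all positive integers n. -/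
/-!
Induction on `d` and, for fixed `d`, strong induction on `n`, with `ℓ = log₂ n` and `K = d - 1`.
Both kinds of recursive calls lose a fixed amount `δ = log₂ (9/8)` of `ℓ`: `⌈7n/8⌉ ≤ 8n/9`, and
for the split terms `2^u · (⌈n/2^(u+1)⌉ + 1) ≤ 8n/9`, so that by convexity of `x ↦ x^K`
`(u+1)^K + ℓ(m)^K ≤ 1 + (u + ℓ(m))^K ≤ 1 + (ℓ - δ)^K`. Hence every term of the recurrence is
`2^(β(ℓ - δ)^K)` times factors `2^(O(ℓ^(K-1)))` (the constant `α`, the squared `f (d-1)`, bounded by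
the outer induction, and the at most `n` summands), and the gain `β(ℓ^K - (ℓ - δ)^K) ≥ βδℓ^(K-1)`
absorbs them once `β` is large. Small `n` are covered by taking `β` above the largest `f d n`.
-/

open Finset Real

section OrderedRing
variable {R : Type*} [CommRing R] [LinearOrder R] [IsStrictOrderedRing R]

lemma sub_mul_pow_le_pow_succ_sub_pow_succ {x y : R} (hy : 0 ≤ y) (hyx : y ≤ x) (k : ℕ) :
    (x - y) * x ^ k ≤ x ^ (k + 1) - y ^ (k + 1) := by
  rw [← geom_sum₂_mul, mul_comm]
  gcongr
  simpa using single_le_sum (f := fun i ↦ x ^ i * y ^ (k + 1 - 1 - i))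
    (fun i _ ↦ by have := hy.trans hyx; positivity) (mem_range.2 (lt_add_one k))

lemma pow_add_sub_pow_le_pow_add_sub_pow {s t t' : R} (hs : 0 ≤ s) (ht : 0 ≤ t) (htt' : t ≤ t')
    (k : ℕ) : (t + s) ^ k - t ^ k ≤ (t' + s) ^ k - t' ^ k := by
  rw [← geom_sum₂_mul, ← geom_sum₂_mul, add_sub_cancel_left, add_sub_cancel_left]
  have := ht.trans htt'
  gcongr

lemma pow_add_pow_le_one_add_pow {a b : R} (ha : 1 ≤ a) (hb : 1 ≤ b) (k : ℕ) :
    a ^ k + b ^ k ≤ 1 + (a + b - 1) ^ k := by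
  have := pow_add_sub_pow_le_pow_add_sub_pow (sub_nonneg.2 ha) zero_le_one hb k
  rw [add_sub_cancel, one_pow, ← add_sub_assoc, add_comm b] at this
  linarith

end OrderedRing

lemma add_mul_sub_pow_succ_le_mul_pow_succ {α C β δ ℓ : ℝ} {k : ℕ} (hk : k ≠ 0) (hα : 0 ≤ α)
    (hβ : 0 ≤ β) (hℓ : 1 ≤ ℓ) (hδle : δ ≤ ℓ) (hδℓ : 2 ≤ δ * ℓ) (hβδ : 2 * (α + C + 2) ≤ β * δ) :
    1 + α + C * ℓ ^ k + ℓ + β + β * (ℓ - δ) ^ (k + 1) ≤ β * ℓ ^ (k + 1) := by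
  have hδ : 0 ≤ δ := by nlinarith
  have hgain := sub_mul_pow_le_pow_succ_sub_pow_succ (sub_nonneg.2 hδle) (sub_le_self ℓ hδ) k
  rw [sub_sub_cancel] at hgain
  have hℓk : ℓ ≤ ℓ ^ k := le_self_pow₀ hℓ hk
  have hone : 1 ≤ ℓ ^ k := one_le_pow₀ hℓ
  have h1 : β * (δ * ℓ ^ k) ≤ β * (ℓ ^ (k + 1) - (ℓ - δ) ^ (k + 1)) :=
    mul_le_mul_of_nonneg_left hgain hβ
  have h2 : 2 * (α + C + 2) * ℓ ^ k ≤ β * δ * ℓ ^ k :=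
    mul_le_mul_of_nonneg_right hβδ (by positivity)
  have h3 : β * 2 ≤ β * (δ * ℓ) := mul_le_mul_of_nonneg_left hδℓ hβ
  have h4 : β * δ * ℓ ≤ β * δ * ℓ ^ k := mul_le_mul_of_nonneg_left hℓk (by positivity)
  have h5 : α ≤ α * ℓ ^ k := le_mul_of_one_le_right hα hone
  nlinarith

lemma natCast_le_two_rpow (m : ℕ) : (m : ℝ) ≤ 2 ^ (m : ℝ) := by
  rw [rpow_natCast]
  exact_mod_cast Nat.lt_two_pow_self.le

lemma logb_le_logb_sub_logb_of_mul_le {b c x y : ℝ} (hb : 1 < b) (hc : 0 < c) (hx : 0 < x)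
    (h : c * x ≤ y) : logb b x ≤ logb b y - logb b c := by
  have := logb_le_logb_of_le hb (by positivity) h
  rw [logb_mul hc.ne' hx.ne'] at this
  linarith

lemma natCast_le_logb_two {j n : ℕ} (h : 2 ^ j ≤ n) : (j : ℝ) ≤ logb 2 n := by
  rw [le_logb_iff_rpow_le one_lt_two (by exact_mod_cast Nat.one_le_two_pow.trans h), rpow_natCast]
  exact_mod_cast h

lemma one_le_logb_two {n : ℕ} (h : 2 ≤ n) : 1 ≤ logb 2 (n : ℝ) := by
  exact_mod_cast natCast_le_logb_two (j := 1) (by simpa using h)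

lemma natCast_add_logb_two_le {u m n : ℕ} (hm : 0 < m) (h : 9 * (2 ^ u * m) ≤ 8 * n) :
    u + logb 2 (m : ℝ) ≤ logb 2 n - logb 2 (9 / 8) := by
  have hm' : (0 : ℝ) < m := by exact_mod_cast hm
  have h' : 9 / 8 * (2 ^ u * m : ℝ) ≤ n := by
    have : (9 * (2 ^ u * m) : ℝ) ≤ 8 * n := by exact_mod_cast h
    linarith
  have := logb_le_logb_sub_logb_of_mul_le one_lt_two (by norm_num) (by positivity) h'
  rwa [logb_mul (by positivity) hm'.ne', logb_pow, logb_self_eq_one one_lt_two, mul_one] at this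

lemma nine_mul_mul_div_add_one_le_sixteen_mul {n q : ℕ} (h : 4 * q ≤ n) :
    9 * (q * ((n + q - 1) / q + 1)) ≤ 16 * n := by
  have := Nat.mul_div_le (n + q - 1) q
  rw [mul_add, mul_one]
  omega

def splitSum (g : ℕ → ℕ) (n : ℕ) : ℕ :=
  ∑ u ∈ range (Nat.log 2 n - 2), g (2 ^ (u + 1)) * g ((n + 2 ^ (u + 1) - 1) / 2 ^ (u + 1) + 1)

section Recurrence
variable {g H : ℕ → ℕ} {β C : ℝ} {α k K n : ℕ}

lemma splitSum_term_le (hβ : 0 ≤ β)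
    (ih : ∀ m, 1 ≤ m → m < n → (g m : ℝ) ≤ 2 ^ (β * logb 2 m ^ K)) {u : ℕ}
    (hu : u < Nat.log 2 n - 2) :
    (g (2 ^ (u + 1)) * g ((n + 2 ^ (u + 1) - 1) / 2 ^ (u + 1) + 1) : ℝ) ≤
      2 ^ (β * (1 + (logb 2 n - logb 2 (9 / 8)) ^ K)) := by
  set q := 2 ^ (u + 1) with hq
  set m := (n + q - 1) / q + 1
  have hq2 : 2 ≤ q := Nat.le_self_pow (by omega) 2
  have hq4 : 4 * q ≤ n :=
    calc 4 * q = 2 ^ (u + 3) := by rw [hq]; ring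
      _ ≤ 2 ^ Nat.log 2 n := Nat.pow_le_pow_right two_pos (by omega)
      _ ≤ n := Nat.pow_log_le_self 2 (by rintro rfl; simp at hu)
  have hdesc : 9 * (2 ^ u * m) ≤ 8 * n := by
    have h16 : 9 * (q * m) ≤ 16 * n := nine_mul_mul_div_add_one_le_sixteen_mul hq4
    have hqm : q * m = 2 * (2 ^ u * m) := by rw [hq, pow_succ]; ring
    omega
  have hm2 : 2 ≤ m := by
    have := Nat.div_pos (show q ≤ n + q - 1 by omega) (by omega)
    omega
  have hmn : m < n := by
    have := Nat.le_mul_of_pos_left m (Nat.two_pow_pos u)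
    omega
  have hlogq : logb 2 (q : ℝ) = u + 1 := by
    rw [hq, Nat.cast_pow, Nat.cast_ofNat, logb_pow, logb_self_eq_one one_lt_two, mul_one]
    push_cast; ring
  have hdescent := natCast_add_logb_two_le (by omega) hdesc
  have hlogm := one_le_logb_two hm2
  have hconvex : (u + 1 : ℝ) ^ K + logb 2 m ^ K ≤ 1 + (u + logb 2 m) ^ K := by
    have := pow_add_pow_le_one_add_pow (a := (u + 1 : ℝ)) (by linarith) hlogm K
    rwa [add_right_comm, add_sub_cancel_right] at this
  calc (g q * g m : ℝ) ≤ 2 ^ (β * logb 2 q ^ K) * 2 ^ (β * logb 2 m ^ K) :=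
        mul_le_mul (ih q (by omega) (by omega)) (ih m (by omega) hmn) (by positivity)
          (by positivity)
    _ = 2 ^ (β * ((u + 1) ^ K + logb 2 m ^ K)) := by
        rw [← rpow_add two_pos, hlogq, mul_add]
    _ ≤ 2 ^ (β * (1 + (logb 2 n - logb 2 (9 / 8)) ^ K)) := by
        gcongr 2 ^ (β * ?_)
        · exact one_le_two
        refine hconvex.trans ?_
        gcongr

lemma splitSum_le (hβ : 0 ≤ β) (ih : ∀ m, 1 ≤ m → m < n → (g m : ℝ) ≤ 2 ^ (β * logb 2 m ^ K)) :
    (splitSum g n : ℝ) ≤ n * 2 ^ (β * (1 + (logb 2 n - logb 2 (9 / 8)) ^ K)) := by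
  unfold splitSum
  push_cast
  calc _ ≤ ∑ _u ∈ range (Nat.log 2 n - 2),
          (2 : ℝ) ^ (β * (1 + (logb 2 n - logb 2 (9 / 8)) ^ K)) :=
        sum_le_sum fun u hu ↦ splitSum_term_le hβ ih (mem_range.1 hu)
    _ ≤ n * 2 ^ (β * (1 + (logb 2 n - logb 2 (9 / 8)) ^ K)) := by
        rw [sum_const, card_range, nsmul_eq_mul]
        gcongr
        exact_mod_cast (Nat.sub_le _ _).trans (Nat.log_le_self 2 n)

lemma le_two_rpow_of_recurrence_of_large (hβ : 0 ≤ β) (hC : 0 ≤ C) (hk : k ≠ 0)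
    (ih : ∀ m, 1 ≤ m → m < n → (g m : ℝ) ≤ 2 ^ (β * logb 2 m ^ (k + 1)))
    (hn : 64 ≤ n) (hrec : g n ≤ α * (g ((7 * n + 7) / 8) + H n * splitSum g n))
    (hH : (H n : ℝ) ≤ 2 ^ (C * logb 2 n ^ k)) (hlarge : 2 ≤ logb 2 (9 / 8) * logb 2 n)
    (hβδ : 2 * (α + C + 2) ≤ β * logb 2 (9 / 8)) :
    (g n : ℝ) ≤ 2 ^ (β * logb 2 n ^ (k + 1)) := by
  set ℓ := logb 2 (n : ℝ)
  set δ := logb 2 (9 / 8 : ℝ)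
  have hℓ : 1 ≤ ℓ := one_le_logb_two (by omega)
  set c := (7 * n + 7) / 8
  have hlogc : logb 2 (c : ℝ) ≤ ℓ - δ := by
    simpa using natCast_add_logb_two_le (u := 0) (by omega) (by omega : 9 * (2 ^ 0 * c) ≤ 8 * n)
  have hlogc0 : 0 ≤ logb 2 (c : ℝ) := logb_nonneg one_lt_two (by exact_mod_cast (by omega : 1 ≤ c))
  set E := C * ℓ ^ k + ℓ + β + β * (ℓ - δ) ^ (k + 1) with hE
  have hexp : 1 + α + E ≤ β * ℓ ^ (k + 1) := by
    rw [hE, ← add_assoc, ← add_assoc, ← add_assoc]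
    exact add_mul_sub_pow_succ_le_mul_pow_succ hk (Nat.cast_nonneg α) hβ hℓ (by linarith) hlarge hβδ
  have hgc : (g c : ℝ) ≤ 2 ^ E :=
    calc (g c : ℝ) ≤ 2 ^ (β * logb 2 c ^ (k + 1)) := ih c (by omega) (by omega)
      _ ≤ 2 ^ E := by
        gcongr 2 ^ ?_
        · exact one_le_two
        have : β * logb 2 c ^ (k + 1) ≤ β * (ℓ - δ) ^ (k + 1) := by gcongr
        have : 0 ≤ C * ℓ ^ k := by positivity
        linarith
  have hHS : (H n * splitSum g n : ℝ) ≤ 2 ^ E :=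
    calc (H n * splitSum g n : ℝ)
        ≤ 2 ^ (C * ℓ ^ k) * (2 ^ ℓ * 2 ^ (β * (1 + (ℓ - δ) ^ (k + 1)))) := by
          rw [rpow_logb two_pos one_lt_two.ne' (by positivity)]
          exact mul_le_mul hH (splitSum_le hβ ih) (by positivity) (by positivity)
      _ = 2 ^ E := by rw [← rpow_add two_pos, ← rpow_add two_pos, hE]; ring_nf
  clear_value E
  calc (g n : ℝ) ≤ α * (g c + H n * splitSum g n) := by exact_mod_cast hrec
    _ ≤ 2 ^ (α : ℝ) * (2 ^ E + 2 ^ E) := by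
        gcongr
        exact natCast_le_two_rpow α
    _ = 2 ^ (1 + α + E) := by rw [rpow_add two_pos, rpow_add two_pos, rpow_one]; ring
    _ ≤ 2 ^ (β * ℓ ^ (k + 1)) := rpow_le_rpow_of_exponent_le one_le_two hexp

theorem exists_le_two_rpow_of_recurrence (hC : 0 ≤ C) (hk : k ≠ 0) (hg1 : g 1 ≤ 1)
    (hH : ∀ n, 8 ≤ n → (H n : ℝ) ≤ 2 ^ (C * logb 2 n ^ k))
    (hrec : ∀ n, 8 ≤ n → g n ≤ α * (g ((7 * n + 7) / 8) + H n * splitSum g n)) :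
    ∃ β : ℕ, ∀ n, 1 ≤ n → (g n : ℝ) ≤ 2 ^ (β * logb 2 n ^ (k + 1)) := by
  set δ := logb 2 (9 / 8 : ℝ)
  have hδ : 0 < δ := logb_pos one_lt_two (by norm_num)
  -- beyond `2 ^ N` we have `n ≥ 64` and `δ * log₂ n ≥ 2`
  set N := ⌈2 / δ⌉₊ + 6
  set β := (range (2 ^ N)).sup g + ⌈2 * (α + C + 2) / δ⌉₊
  refine ⟨β, fun n hn ↦ ?_⟩
  induction n using Nat.strong_induction_on with | _ n ih => ?_
  obtain rfl | hn2 := hn.eq_or_lt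
  · simpa using hg1
  by_cases hsmall : n < 2 ^ N
  · calc (g n : ℝ) ≤ β := by
          exact_mod_cast (le_sup (mem_range.2 hsmall)).trans (Nat.le_add_right _ _)
      _ ≤ 2 ^ (β : ℝ) := natCast_le_two_rpow β
      _ ≤ 2 ^ (β * logb 2 n ^ (k + 1)) := by
          gcongr
          · exact one_le_two
          exact le_mul_of_one_le_right (Nat.cast_nonneg β) (one_le_pow₀ (one_le_logb_two hn2))
  have hN := natCast_le_logb_two (not_lt.1 hsmall)
  have h64 : 2 ^ 6 ≤ 2 ^ N := Nat.pow_le_pow_right two_pos (Nat.le_add_left 6 _)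
  refine le_two_rpow_of_recurrence_of_large (Nat.cast_nonneg β) hC hk
    (fun m hm hmn ↦ ih m hmn hm) (by omega) (hrec n (by omega)) (hH n (by omega)) ?_ ?_
  · have : 2 / δ ≤ N := by push_cast [N]; linarith [Nat.le_ceil (2 / δ)]
    rw [div_le_iff₀ hδ] at this
    nlinarith
  · have : 2 * (α + C + 2) / δ ≤ β := by
      push_cast [β]
      linarith [Nat.le_ceil (2 * (α + C + 2) / δ), Nat.cast_nonneg (α := ℝ) ((range (2 ^ N)).sup g)]
    rwa [div_le_iff₀ hδ] at this

end Recurrence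

lemma sq_apply_two_mul_pow_le {f : ℕ → ℕ} {β : ℝ} {k d n : ℕ} (hβ : 0 ≤ β)
    (hf : ∀ m, 1 ≤ m → (f m : ℝ) ≤ 2 ^ (β * logb 2 m ^ k)) (hn : 2 ≤ n) :
    ((f (2 * n ^ d) ^ 2 : ℕ) : ℝ) ≤ 2 ^ (2 * β * (d + 1) ^ k * logb 2 n ^ k) := by
  have hℓ := one_le_logb_two hn
  have hm : 1 ≤ 2 * n ^ d := by have := Nat.one_le_pow d n (by omega); omega
  have hlog : logb 2 ((2 * n ^ d : ℕ) : ℝ) ≤ (d + 1) * logb 2 n := by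
    push_cast
    rw [logb_mul two_ne_zero (by positivity), logb_pow, logb_self_eq_one one_lt_two]
    linarith
  have hf' : (f (2 * n ^ d) : ℝ) ≤ 2 ^ (β * ((d + 1) * logb 2 n) ^ k) := by
    refine (hf _ hm).trans ?_
    gcongr
    · exact one_le_two
    · exact logb_nonneg one_lt_two (by exact_mod_cast hm)
  calc ((f (2 * n ^ d) ^ 2 : ℕ) : ℝ) ≤ (2 ^ (β * ((d + 1) * logb 2 n) ^ k)) ^ 2 := by
        push_cast; gcongr
    _ = 2 ^ (2 * β * (d + 1) ^ k * logb 2 n ^ k) := by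
        rw [← rpow_natCast, ← rpow_mul two_pos.le, mul_pow]; ring_nf

theorem recurrence_solution_general (f : ℕ → ℕ → ℕ)
    (hf2 : ∀ n : ℕ, 1 ≤ n → f 2 n ≤ n)
    (hf1 : ∀ d : ℕ, 2 ≤ d → f d 1 = 1)
    (hrec : ∀ d : ℕ, 3 ≤ d → ∃ α : ℕ, ∀ n : ℕ, 8 ≤ n →
      f d n ≤ α * (f d ((7 * n + 7) / 8) +
        (f (d - 1) (2 * n ^ (d - 1))) ^ 2 *
          ∑ u ∈ Finset.range (Nat.log 2 n - 2),
            f d (2 ^ (u + 1)) * f d ((n + 2 ^ (u + 1) - 1) / 2 ^ (u + 1) + 1))) :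
    ∀ d : ℕ, 2 ≤ d → ∃ β : ℕ, ∀ n : ℕ, 1 ≤ n →
      (f d n : ℝ) ≤ 2 ^ ((β : ℝ) * Real.logb 2 (n : ℝ) ^ (d - 1)) := by
  intro d hd
  induction d, hd using Nat.le_induction with
  | base =>
    refine ⟨1, fun n hn ↦ ?_⟩
    rw [Nat.cast_one, one_mul, pow_one, rpow_logb two_pos one_lt_two.ne' (by positivity)]
    exact_mod_cast hf2 n hn
  | succ d hd ih =>
    obtain ⟨β, hβ⟩ := ih
    obtain ⟨α, hα⟩ := hrec (d + 1) (by omega)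
    obtain ⟨k, rfl⟩ : ∃ k, d = k + 1 := ⟨d - 1, by omega⟩
    simp only [Nat.add_sub_cancel] at hβ hα ⊢
    exact exists_le_two_rpow_of_recurrence (by positivity) (by omega) (hf1 _ (by omega)).le
      (fun n hn ↦ sq_apply_two_mul_pow_le (Nat.cast_nonneg β) hβ (by omega)) hα

/-- Suppose `f 2, f 3, …` are functions from the positive integers to
the positive integers such that: (i) `f 2 n ≤ n` for all `n ≥ 1`; (ii) `f d 1 = 1` for
all `d ≥ 2`; and (iii) for every `d ≥ 3` there is `α ∈ ℕ` such that for every `n ≥ 8`,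
`f d n ≤ α * (f d ⌈7n/8⌉ + f (d-1) (2n^(d-1))^2 * Σ_{u=0}^{⌊log₂ n⌋ - 3} f d (2^(u+1)) * f d (⌈n / 2^(u+1)⌉ + 1))`.
Then for every `d ≥ 2` there is `β ∈ ℕ` with `f d n ≤ 2 ^ (β * (log₂ n)^(d-1))` for all
positive `n`.  (Ceilings of quotients of naturals are written via `(a + b - 1) / b`;
the sum over `u = 0, …, ⌊log₂ n⌋ - 3` is a sum over `Finset.range (Nat.log 2 n - 2)`,
which agrees since `Nat.log 2 n ≥ 3` for `n ≥ 8`.) -/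
theorem recurrence_solution (f : ℕ → ℕ → ℕ)
    (hpos : ∀ d n : ℕ, 2 ≤ d → 1 ≤ n → 1 ≤ f d n)
    (hf2 : ∀ n : ℕ, 1 ≤ n → f 2 n ≤ n)
    (hf1 : ∀ d : ℕ, 2 ≤ d → f d 1 = 1)
    (hrec : ∀ d : ℕ, 3 ≤ d → ∃ α : ℕ, ∀ n : ℕ, 8 ≤ n →
      f d n ≤ α * (f d ((7 * n + 7) / 8) +
        (f (d - 1) (2 * n ^ (d - 1))) ^ 2 *
          ∑ u ∈ Finset.range (Nat.log 2 n - 2),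
            f d (2 ^ (u + 1)) * f d ((n + 2 ^ (u + 1) - 1) / 2 ^ (u + 1) + 1))) :
    ∀ d : ℕ, 2 ≤ d → ∃ β : ℕ, ∀ n : ℕ, 1 ≤ n →
      (f d n : ℝ) ≤ 2 ^ ((β : ℝ) * Real.logb 2 (n : ℝ) ^ (d - 1)) :=
  recurrence_solution_general f hf2 hf1 hrec
end

section
/- Let G be a finite simple graph with clique number ω, let M be the adjacency matrix of G under some linear ordering of its vertices, and let D be a symmetric division of M. Suppose that, for some integer d ≥ 1, M has no d-almost mixed minor that is a coarsening of D. Then the clique number of the horizontal compression G^H_D satisfies ω(G^H_D) ≤ 2 · binom(ω + d − 2, d − 1), and consequently ω(G^H_D) ≤ 2ω^(d−1). -/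
namespace TwPaper


/-- A `{0,1}`-matrix with `m` rows and `n` columns, entries modeled as `Bool`. -/
abbrev BMatrix (m n : ℕ) := Matrix (Fin m) (Fin n) Bool

/-- The submatrix of `M` given by rows `R` and columns `C` is horizontal:
all its rows are constant. -/
def Horizontal {m n : ℕ} (M : BMatrix m n) (R : Set (Fin m)) (C : Set (Fin n)) : Prop :=
  ∀ i ∈ R, ∀ j ∈ C, ∀ j' ∈ C, M i j = M i j'

/-- The submatrix of `M` given by rows `R` and columns `C` is vertical:
all its columns are constant. -/
def Vertical {m n : ℕ} (M : BMatrix m n) (R : Set (Fin m)) (C : Set (Fin n)) : Prop :=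
  ∀ j ∈ C, ∀ i ∈ R, ∀ i' ∈ R, M i j = M i' j

/-- The submatrix of `M` given by rows `R` and columns `C` is mixed:
neither horizontal nor vertical. -/
def Mixed {m n : ℕ} (M : BMatrix m n) (R : Set (Fin m)) (C : Set (Fin n)) : Prop :=
  ¬ Horizontal M R C ∧ ¬ Vertical M R C

/-- The submatrix of `M` given by rows `R` and columns `C` is constant `0`. -/
def ConstantZero {m n : ℕ} (M : BMatrix m n) (R : Set (Fin m)) (C : Set (Fin n)) : Prop :=
  ∀ i ∈ R, ∀ j ∈ C, M i j = false

/-- A `d`-division of an `m × n` matrix: a partition of the rows into `d` contiguous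
nonempty blocks, and likewise for columns.  It is encoded by the monotone surjective
maps sending a row (resp. column) to the index of its block. -/
structure Division (m n d : ℕ) where
  row : Fin m → Fin d
  col : Fin n → Fin d
  row_mono : Monotone row
  col_mono : Monotone col
  row_surj : Function.Surjective row
  col_surj : Function.Surjective col

/-- The `i`-th row block of a division. -/
def Division.rowBlock {m n d : ℕ} (D : Division m n d) (i : Fin d) : Set (Fin m) :=
  {a | D.row a = i}

/-- The `j`-th column block of a division. -/
def Division.colBlock {m n d : ℕ} (D : Division m n d) (j : Fin d) : Set (Fin n) :=
  {b | D.col b = j}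

/-- The zone `D[i,j]` of the division `D` of `M` is mixed. -/
def Division.ZoneMixed {m n d : ℕ} (D : Division m n d) (M : BMatrix m n) (i j : Fin d) : Prop :=
  Mixed M (D.rowBlock i) (D.colBlock j)

/-- A `d`-division is a `d`-almost mixed minor if every off-diagonal zone is mixed. -/
def IsAlmostMixedMinor {m n d : ℕ} (M : BMatrix m n) (D : Division m n d) : Prop :=
  ∀ i j : Fin d, i ≠ j → D.ZoneMixed M i j

/-- A `d`-division is a `d`-mixed minor if every zone is mixed. -/
def IsMixedMinor {m n d : ℕ} (M : BMatrix m n) (D : Division m n d) : Prop :=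
  ∀ i j : Fin d, D.ZoneMixed M i j

/-- `M` is `d`-almost mixed-free: it has no `d`-almost mixed minor. -/
def AlmostMixedFree {m n : ℕ} (d : ℕ) (M : BMatrix m n) : Prop :=
  ¬ ∃ D : Division m n d, IsAlmostMixedMinor M D

/-- `M` is `d`-mixed-free: it has no `d`-mixed minor. -/
def MixedFree {m n : ℕ} (d : ℕ) (M : BMatrix m n) : Prop :=
  ¬ ∃ D : Division m n d, IsMixedMinor M D

/-- A graphic matrix: symmetric with zero diagonal. -/
def Graphic {n : ℕ} (M : BMatrix n n) : Prop :=
  (∀ i j, M i j = M j i) ∧ (∀ i, M i i = false)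

/-- A division of a square matrix is symmetric if rows and columns are
partitioned in exactly the same way. -/
def Division.Symm {n d : ℕ} (D : Division n n d) : Prop := D.row = D.col

/-- `L` is a coarsening of `D`: every row (resp. column) block of `L` is a union of
consecutive row (resp. column) blocks of `D`. -/
def Coarsens {m n d e : ℕ} (L : Division m n e) (D : Division m n d) : Prop :=
  (∀ a a' : Fin m, D.row a = D.row a' → L.row a = L.row a') ∧
  (∀ b b' : Fin n, D.col b = D.col b' → L.col b = L.col b')

/-- The zone is horizontal and not constant `0`. -/
def HorizNonzero {m n : ℕ} (M : BMatrix m n) (R : Set (Fin m)) (C : Set (Fin n)) : Prop :=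
  Horizontal M R C ∧ ¬ ConstantZero M R C

/-- The zone is vertical and not constant `0`. -/
def VertNonzero {m n : ℕ} (M : BMatrix m n) (R : Set (Fin m)) (C : Set (Fin n)) : Prop :=
  Vertical M R C ∧ ¬ ConstantZero M R C

/-- The horizontal compression `G^H_D` of a graphic matrix `M` along a symmetric
division `D` with `s` blocks: vertices are the blocks, and `i j` (for `i < j`) are
adjacent iff the zone `D[i,j]` is horizontal and not constant `0`. -/
def horizCompression {n s : ℕ} (M : BMatrix n n) (D : Division n n s) : SimpleGraph (Fin s) :=
  SimpleGraph.fromRel (fun i j => i < j ∧ HorizNonzero M (D.rowBlock i) (D.colBlock j))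

/-- The vertical compression `G^V_D`. -/
def vertCompression {n s : ℕ} (M : BMatrix n n) (D : Division n n s) : SimpleGraph (Fin s) :=
  SimpleGraph.fromRel (fun i j => i < j ∧ VertNonzero M (D.rowBlock i) (D.colBlock j))

/-- The mixed compression `G^M_D`: `i ≠ j` are adjacent iff the zone `D[i,j]` is mixed. -/
def mixedCompression {n s : ℕ} (M : BMatrix n n) (D : Division n n s) : SimpleGraph (Fin s) :=
  SimpleGraph.fromRel (fun i j => D.ZoneMixed M i j)

open Classical in
/-- The adjacency matrix of a graph on `Fin s`, rows and columns in the natural order. -/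
noncomputable def graphMatrix {s : ℕ} (G : SimpleGraph (Fin s)) : BMatrix s s :=
  fun i j => if G.Adj i j then true else false

open Classical in
/-- The adjacency matrix of `G` under the vertex ordering given by the
enumeration `e` of its vertices. -/
noncomputable def adjMatrix {V : Type*} [Fintype V] (G : SimpleGraph V)
    (e : Fin (Fintype.card V) ≃ V) : BMatrix (Fintype.card V) (Fintype.card V) :=
  fun i j => if G.Adj (e i) (e j) then true else false

/-- `G` admits, under some linear ordering of its vertices, a `d`-almost mixed-free
adjacency matrix. -/
def AdmitsAMFree {V : Type*} [Fintype V] (d : ℕ) (G : SimpleGraph V) : Prop :=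
  ∃ e : Fin (Fintype.card V) ≃ V, AlmostMixedFree d (adjMatrix G e)

/-!
Enumerate a clique of `G^H_D` as blocks `b 0 < b 1 < ⋯ < b (m-1)`. For `a < c` the zone
`D[b a, b c]` is horizontal and nonzero, so some row of block `b a` is all ones on block `b c`.
A chain of rows, each all ones on the blocks of the later ones, is a clique of `G`, hence has
length at most `ω`. Cutting `0, …, m-1` into `d` consecutive groups such that, for all groups
`p < q`, some row of group `p` is all ones on one block of group `q` but not on another, gives a
`d`-almost mixed minor coarsening `D` (the zones below the diagonal are mixed by symmetry).

The bound `m < 2 * C(ω + d - 2, d - 1)` is proved by induction on `d` and `ω`. Let `y` be the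
last position from which a chain of length `ω` starts. Before `y` there is no cut into `d - 1`
groups: otherwise `[y, m)` could be appended as a last group, since a group not splitting it
would extend the chain to length `ω + 1`. After `y` chains are shorter than `ω`. Pascal's rule
adds up the two bounds.
-/

open Finset

section Chains

-- Positions `a : ℕ` stand for the blocks of the clique, `R a v` says that row `v` lies in
-- block `a`, and `adj v c` that row `v` is all ones on block `c`.
variable {W : Type*} (R : ℕ → W → Prop) (adj : W → ℕ → Prop)

def IsChain (l : List (ℕ × W)) : Prop :=
  (∀ x ∈ l, R x.1 x.2) ∧ l.Pairwise fun x y => adj x.2 y.1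

def ChainBounded (lo hi g : ℕ) : Prop :=
  ∀ l : List (ℕ × W), IsChain R adj l → (∀ x ∈ l, x.1 ∈ Set.Ico lo hi) → l.length ≤ g

def Splits (A B : Set ℕ) : Prop :=
  ∃ a ∈ A, ∃ v, R a v ∧ ∃ c ∈ B, ∃ c' ∈ B, adj v c ∧ ¬ adj v c'

def IsMixedPartition (lo hi d : ℕ) (f : ℕ → ℕ) : Prop :=
  f 0 = lo ∧ f d = hi ∧ StrictMonoOn f (Set.Iic d) ∧
    ∀ p q, p < q → q < d → Splits R adj (Set.Ico (f p) (f (p + 1))) (Set.Ico (f q) (f (q + 1)))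

variable {R adj}

lemma ChainBounded.mono {lo hi g lo' hi' : ℕ} (h : ChainBounded R adj lo hi g) (hlo : lo ≤ lo')
    (hhi : hi' ≤ hi) : ChainBounded R adj lo' hi' g := fun l hl hmem =>
  h l hl fun x hx => Set.Ico_subset_Ico hlo hhi (hmem x hx)

lemma chainBounded_of_le {lo hi : ℕ} (h : hi ≤ lo) (g : ℕ) : ChainBounded R adj lo hi g := by
  rintro (_ | ⟨x, l⟩) _ hmem
  · simp
  · have := hmem x List.mem_cons_self
    simp only [Set.mem_Ico] at this
    omega

lemma le_add_one_of_chainBounded_one {k lo hi : ℕ} (hR : ∀ a < k, ∃ v, R a v)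
    (hadj : ∀ a c, a < c → c < k → ∃ v, R a v ∧ adj v c) (hk : hi ≤ k)
    (hB : ChainBounded R adj lo hi 1) : hi ≤ lo + 1 := by
  by_contra! h
  obtain ⟨v, hv, hvw⟩ := hadj lo (lo + 1) (by omega) (by omega)
  obtain ⟨w, hw⟩ := hR (lo + 1) (by omega)
  have := hB [(lo, v), (lo + 1, w)] ⟨by simp [hv, hw], by simp [hvw]⟩ fun x hx => by
    simp only [List.mem_cons, List.not_mem_nil, or_false] at hx
    rcases hx with rfl | rfl <;> constructor <;> dsimp only <;> omega
  simp at this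

lemma Splits.mono_left {A A' B : Set ℕ} (h : Splits R adj A B) (hA : A ⊆ A') :
    Splits R adj A' B :=
  let ⟨a, ha, rest⟩ := h
  ⟨a, hA ha, rest⟩

lemma isMixedPartition_one {lo hi : ℕ} (h : lo < hi) :
    IsMixedPartition R adj lo hi 1 fun q => if q = 0 then lo else hi := by
  refine ⟨rfl, rfl, strictMonoOn_Iic_of_lt_succ fun m hm => ?_, fun p q hpq hq => by omega⟩
  obtain rfl : m = 0 := by omega
  simpa using h

lemma IsMixedPartition.apply_lt {lo hi d p q : ℕ} {f : ℕ → ℕ}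
    (h : IsMixedPartition R adj lo hi d f) (hpq : p < q) (hq : q ≤ d) : f p < f q :=
  h.2.2.1 (Set.mem_Iic.2 (hpq.le.trans hq)) (Set.mem_Iic.2 hq) hpq

lemma IsMixedPartition.apply_le {lo hi d p q : ℕ} {f : ℕ → ℕ}
    (h : IsMixedPartition R adj lo hi d f) (hpq : p ≤ q) (hq : q ≤ d) : f p ≤ f q :=
  h.2.2.1.monotoneOn (Set.mem_Iic.2 (hpq.trans hq)) (Set.mem_Iic.2 hq) hpq

lemma IsMixedPartition.extend_left {lo q hi d : ℕ} {f : ℕ → ℕ}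
    (h : IsMixedPartition R adj q hi (d + 1) f) (hlo : lo ≤ q) :
    IsMixedPartition R adj lo hi (d + 1) (Function.update f 0 lo) := by
  obtain ⟨h0, hd, hmono, hsplit⟩ := h
  refine ⟨by simp, by simpa using hd, strictMonoOn_Iic_of_lt_succ fun m hm => ?_,
    fun p r hpr hr => ?_⟩
  · have := hmono (a := m) (b := m + 1) (Set.mem_Iic.2 (by omega)) (Set.mem_Iic.2 hm) (by omega)
    rw [Order.succ_eq_add_one, Function.update_of_ne (m.add_one_ne_zero)]
    rcases m.eq_zero_or_pos with rfl | hm0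
    · rw [Function.update_self]
      exact hlo.trans_lt (h0 ▸ this)
    · rwa [Function.update_of_ne hm0.ne']
  · rcases p with _ | p
    · simp only [Function.update_of_ne (show r ≠ 0 by omega), Function.update_self,
        zero_add, Function.update_of_ne one_ne_zero]
      exact (hsplit 0 r hpr hr).mono_left (Set.Ico_subset_Ico (h0 ▸ hlo) le_rfl)
    · simpa [Function.update_of_ne (show r ≠ 0 by omega)] using hsplit _ r hpr hr

lemma IsMixedPartition.snoc {lo y hi d : ℕ} {f : ℕ → ℕ} (h : IsMixedPartition R adj lo y d f)
    (hy : y < hi) (hlast : ∀ p < d, Splits R adj (Set.Ico (f p) (f (p + 1))) (Set.Ico y hi)) :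
    IsMixedPartition R adj lo hi (d + 1) (Function.update f (d + 1) hi) := by
  obtain ⟨h0, hd, hmono, hsplit⟩ := h
  refine ⟨by simpa using h0, by simp, strictMonoOn_Iic_of_lt_succ fun m hm => ?_,
    fun p r hpr hr => ?_⟩
  · rw [Order.succ_eq_add_one, Function.update_of_ne (show m ≠ d + 1 by omega)]
    rcases (Nat.lt_succ_iff_lt_or_eq.1 hm) with hm | rfl
    · rw [Function.update_of_ne (show m + 1 ≠ d + 1 by omega)]
      exact hmono (Set.mem_Iic.2 (by omega)) (Set.mem_Iic.2 (by omega)) (by omega)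
    · simpa [hd] using hy
  · simp only [Function.update_of_ne (show p ≠ d + 1 by omega),
      Function.update_of_ne (show p + 1 ≠ d + 1 by omega),
      Function.update_of_ne (show r ≠ d + 1 by omega)]
    rcases (Nat.lt_succ_iff_lt_or_eq.1 hr) with hr | rfl
    · rw [Function.update_of_ne (show r + 1 ≠ d + 1 by omega)]
      exact hsplit p r hpr hr
    · simpa [hd] using hlast p hpr

lemma splits_Ico_of_not_chainBounded {k lo y hi a g : ℕ} {A : Set ℕ}
    (hadj : ∀ a c, a < c → c < k → ∃ v, R a v ∧ adj v c) (hk : hi ≤ k)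
    (hB : ChainBounded R adj lo hi (g + 1)) (hl : ¬ ChainBounded R adj y hi g)
    (ha : a ∈ A) (hlo : lo ≤ a) (hay : a < y) : Splits R adj A (Set.Ico y hi) := by
  simp only [ChainBounded, not_forall, not_le] at hl
  obtain ⟨l, hl, hmem, hlen⟩ := hl
  have hyhi : y < hi := by
    obtain ⟨x, hx⟩ := List.exists_mem_of_length_pos (by omega : 0 < l.length)
    exact (hmem x hx).1.trans_lt (hmem x hx).2
  obtain ⟨v, hv, hvy⟩ := hadj a y hay (by omega)
  by_contra hns
  have hfull : ∀ c ∈ Set.Ico y hi, adj v c := fun c hc => by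
    by_contra hvc
    exact hns ⟨a, ha, v, hv, y, ⟨le_rfl, hyhi⟩, c, hc, hvy, hvc⟩
  have hchain : IsChain R adj ((a, v) :: l) :=
    ⟨by simpa [hv] using hl.1, List.pairwise_cons.2 ⟨fun x hx => hfull x.1 (hmem x hx), hl.2⟩⟩
  have := hB _ hchain fun x hx => by
    rcases List.mem_cons.1 hx with rfl | hx
    · exact ⟨hlo, by omega⟩
    · exact ⟨by have := (hmem x hx).1; omega, (hmem x hx).2⟩
  simp at this
  omega

theorem sub_lt_two_mul_choose_of_chainBounded {k : ℕ} (hR : ∀ a < k, ∃ v, R a v)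
    (hadj : ∀ a c, a < c → c < k → ∃ v, R a v ∧ adj v c) (d g : ℕ) {lo hi : ℕ} (hk : hi ≤ k)
    (hB : ChainBounded R adj lo hi (g + 1))
    (hP : ¬ ∃ f, IsMixedPartition R adj lo hi (d + 1) f) :
    hi - lo < 2 * (g + d).choose d := by
  induction d generalizing g lo hi with
  | zero =>
    have : hi ≤ lo := not_lt.1 fun h => hP ⟨_, isMixedPartition_one h⟩
    rw [Nat.choose_zero_right]
    omega
  | succ d ihd =>
    induction g generalizing lo hi with
    | zero =>
      have := le_add_one_of_chainBounded_one hR hadj hk hB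
      rw [zero_add, Nat.choose_self]
      omega
    | succ g ihg =>
      by_cases hB' : ChainBounded R adj lo hi (g + 1)
      · have := ihg hk hB' hP
        have := Nat.choose_le_choose (d + 1) (show g + (d + 1) ≤ g + 1 + (d + 1) by omega)
        omega
      -- `y` is the largest position such that `[y, hi)` contains a chain of length `g + 2`
      obtain ⟨y, hly, hyhi, hy, hy1⟩ : ∃ y, lo ≤ y ∧ y < hi ∧ ¬ ChainBounded R adj y hi (g + 1) ∧
          ChainBounded R adj (y + 1) hi (g + 1) := by
        obtain ⟨n, hn, hn1⟩ := Nat.exists_not_and_succ_of_not_zero_of_exists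
          (p := fun n => ChainBounded R adj (lo + n) hi (g + 1)) (by simpa using hB')
          ⟨hi - lo, chainBounded_of_le (by omega) _⟩
        refine ⟨lo + n, by omega, not_le.1 fun h => hn (chainBounded_of_le h _), hn, hn1⟩
      have hleft : ¬ ∃ f, IsMixedPartition R adj lo y (d + 1) f := by
        rintro ⟨f, hf⟩
        refine hP ⟨_, hf.snoc hyhi fun p hp => ?_⟩
        have hfp := hf.apply_lt (Nat.lt_succ_self p) hp
        have hfpy := hf.apply_le hp le_rfl
        exact splits_Ico_of_not_chainBounded hadj hk hB hy ⟨le_rfl, hfp⟩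
          (hf.1 ▸ hf.apply_le (Nat.zero_le p) hp.le) (by rw [← hf.2.1]; omega)
      have hright : ¬ ∃ f, IsMixedPartition R adj (y + 1) hi (d + 1 + 1) f :=
        fun ⟨f, hf⟩ => hP ⟨_, hf.extend_left (by omega)⟩
      have h1 := ihd (g + 1) (by omega) (hB.mono le_rfl hyhi.le) hleft
      have h2 := ihg hk hy1 hright
      have hpascal := Nat.choose_succ_succ' (g + 1 + d) d
      rw [show g + 1 + (d + 1) = g + 1 + d + 1 by omega]
      rw [show g + (d + 1) = g + 1 + d by omega] at h2
      omega

end Chains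

open scoped Matrix

section Matrices

variable {m n : ℕ} {M : BMatrix m n} {R : Set (Fin m)} {C : Set (Fin n)}

lemma horizontal_transpose : Horizontal Mᵀ C R ↔ Vertical M R C := Iff.rfl

lemma vertical_transpose : Vertical Mᵀ C R ↔ Horizontal M R C := Iff.rfl

lemma mixed_transpose : Mixed Mᵀ C R ↔ Mixed M R C := by
  rw [Mixed, Mixed, horizontal_transpose, vertical_transpose, and_comm]

lemma mixed_of_ne {i i' : Fin m} {j j' : Fin n} (hi : i ∈ R) (hi' : i' ∈ R) (hj : j ∈ C)
    (hj' : j' ∈ C) (hrow : M i j ≠ M i j') (hcol : M i j' ≠ M i' j') : Mixed M R C :=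
  ⟨fun h => hrow (h i hi j hj j' hj'), fun h => hcol (h j' hj' i hi i' hi')⟩

lemma HorizNonzero.exists_row_eq_true (h : HorizNonzero M R C) :
    ∃ i ∈ R, ∀ j ∈ C, M i j = true := by
  obtain ⟨hH, hZ⟩ := h
  simp only [ConstantZero, not_forall, Bool.not_eq_false] at hZ
  obtain ⟨i, hi, j, hj, hij⟩ := hZ
  exact ⟨i, hi, fun j' hj' => (hH i hi j' hj' j hj).trans hij⟩

end Matrices

section Divisions

variable {m n s d : ℕ}

def Division.coarsen (D : Division m n s) (φ : Fin s → Fin d) (hφ : Monotone φ)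
    (hφ' : Function.Surjective φ) : Division m n d :=
  ⟨φ ∘ D.row, φ ∘ D.col, hφ.comp D.row_mono, hφ.comp D.col_mono,
    hφ'.comp D.row_surj, hφ'.comp D.col_surj⟩

lemma coarsens_coarsen {D : Division m n s} {φ : Fin s → Fin d} {hφ : Monotone φ}
    {hφ' : Function.Surjective φ} : Coarsens (D.coarsen φ hφ hφ') D :=
  ⟨fun _ _ h => congrArg φ h, fun _ _ h => congrArg φ h⟩

lemma Division.Symm.coarsen {D : Division n n s} (hD : D.Symm) {φ : Fin s → Fin d}
    {hφ : Monotone φ} {hφ' : Function.Surjective φ} : (D.coarsen φ hφ hφ').Symm :=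
  congrArg (φ ∘ ·) hD

lemma Division.Symm.rowBlock_eq {D : Division n n s} (hD : D.Symm) (i : Fin s) :
    D.rowBlock i = D.colBlock i := by
  rw [Division.rowBlock, Division.colBlock, hD]

lemma isAlmostMixedMinor_of_lt {M : BMatrix n n} {L : Division n n d} (hM : M.IsSymm)
    (hL : L.Symm) (h : ∀ p q, p < q → L.ZoneMixed M p q) : IsAlmostMixedMinor M L := by
  intro p q hpq
  rcases hpq.lt_or_gt with hpq | hqp
  · exact h p q hpq
  · have := mixed_transpose.2 (h q p hqp)
    rwa [hM.eq, ← hL.rowBlock_eq, hL.rowBlock_eq q] at this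

end Divisions

section Graphs

variable {V : Type*} (G : SimpleGraph V)

lemma length_le_cliqueNum_of_pairwise_adj [Finite V] {l : List V} (h : l.Pairwise G.Adj) :
    l.length ≤ G.cliqueNum := by
  classical
  have := G.symm
  have hnodup : l.Nodup := h.imp G.ne_of_adj
  have hclique : G.IsClique (l.toFinset : Set V) := fun x hx y hy hxy =>
    h.forall (by simpa using hx) (by simpa using hy) hxy
  simpa [List.toFinset_card_of_nodup hnodup] using hclique.card_le_cliqueNum

lemma one_le_cliqueNum [Finite V] [Nonempty V] : 1 ≤ G.cliqueNum := by
  obtain ⟨v⟩ := ‹Nonempty V›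
  simpa using length_le_cliqueNum_of_pairwise_adj G (List.pairwise_singleton G.Adj v)

variable [Fintype V] (e : Fin (Fintype.card V) ≃ V)

lemma adjMatrix_eq_true_iff {i j : Fin (Fintype.card V)} :
    adjMatrix G e i j = true ↔ G.Adj (e i) (e j) := by
  simp [adjMatrix]

lemma adjMatrix_isSymm : (adjMatrix G e).IsSymm :=
  Matrix.IsSymm.ext fun i j => by simp [adjMatrix, G.adj_comm]

end Graphs

lemma horizNonzero_of_horizCompression_adj {n s : ℕ} {M : BMatrix n n} {D : Division n n s}
    {i j : Fin s} (h : (horizCompression M D).Adj i j) (hij : i < j) :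
    HorizNonzero M (D.rowBlock i) (D.colBlock j) := by
  rcases (SimpleGraph.fromRel_adj _ _ _).1 h with ⟨_, h | h⟩
  · exact h.2
  · exact absurd h.1 hij.not_gt

lemma exists_strictMonoOn_mem_of_nonempty {α : Type*} [LinearOrder α] {t : Finset α}
    (ht : t.Nonempty) : ∃ b : ℕ → α, StrictMonoOn b (Set.Iio #t) ∧ ∀ a < #t, b a ∈ t := by
  have := ht.card_pos
  refine ⟨fun a => t.orderEmbOfFin rfl ⟨min a (#t - 1), by omega⟩, fun a ha c hc hac => ?_,
    fun a _ => t.orderEmbOfFin_mem rfl _⟩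
  simp only [Set.mem_Iio] at ha hc
  exact (t.orderEmbOfFin rfl).strictMono (Fin.mk_lt_mk.2 (by omega))

section HorizontalClique

variable {n s : ℕ} (M : BMatrix n n) (D : Division n n s) (b : ℕ → Fin s)

def InBlock (a : ℕ) (v : Fin n) : Prop := D.row v = b a

def FullOnBlock (v : Fin n) (c : ℕ) : Prop := ∀ w ∈ D.colBlock (b c), M v w = true

def cutIndex (f : ℕ → ℕ) (d : ℕ) (i : Fin s) : Fin (d + 1) :=
  ⟨#{q ∈ Finset.Ico 1 (d + 1) | b (f q) ≤ i},
    Nat.lt_succ_of_le ((Finset.card_filter_le _ _).trans (by simp))⟩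

variable {M D b}

lemma cutIndex_mono (f : ℕ → ℕ) (d : ℕ) : Monotone (cutIndex b f d) := fun i j hij =>
  Fin.mk_le_mk.2 <| Finset.card_le_card fun q hq => by
    simp only [Finset.mem_filter] at hq ⊢
    exact ⟨hq.1, hq.2.trans hij⟩

lemma cutIndex_apply {W : Type*} {R : ℕ → W → Prop} {adj : W → ℕ → Prop} {m d : ℕ}
    {f : ℕ → ℕ} (hb : StrictMonoOn b (Set.Iio m)) (hf : IsMixedPartition R adj 0 m (d + 1) f)
    (p : Fin (d + 1)) {a : ℕ} (ha : a ∈ Set.Ico (f p) (f (p + 1))) :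
    cutIndex b f d (b a) = p := by
  have hp := p.isLt
  have ham : a < m := hf.2.1 ▸ ha.2.trans_le (hf.apply_le hp le_rfl)
  have hcuts : {q ∈ Finset.Ico 1 (d + 1) | b (f q) ≤ b a} = Finset.Ico 1 ((p : ℕ) + 1) := by
    ext q
    simp only [Finset.mem_filter, Finset.mem_Ico]
    constructor
    · rintro ⟨⟨hq1, hqd⟩, hqa⟩
      have hfqm : f q < m := hf.2.1 ▸ hf.apply_lt hqd le_rfl
      have hfqa : f q < f (p + 1) := ((hb.le_iff_le hfqm ham).1 hqa).trans_lt ha.2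
      exact ⟨hq1, not_le.1 fun h => (hf.apply_le h hqd.le).not_gt hfqa⟩
    · rintro ⟨hq1, hqp⟩
      have hfqa : f q ≤ a := (hf.apply_le (Nat.le_of_lt_succ hqp) hp.le).trans ha.1
      exact ⟨⟨hq1, by omega⟩, hb.monotoneOn (Set.mem_Iio.2 (by omega)) ham hfqa⟩
  exact Fin.ext (by simp [cutIndex, hcuts])

theorem exists_almostMixedMinor_of_isMixedPartition {m d : ℕ} {f : ℕ → ℕ}
    (hM : M.IsSymm) (hD : D.Symm) (hb : StrictMonoOn b (Set.Iio m))
    (hH : ∀ a c, a < c → c < m → HorizNonzero M (D.rowBlock (b a)) (D.colBlock (b c)))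
    (hf : IsMixedPartition (InBlock D b) (FullOnBlock M D b) 0 m (d + 1) f) :
    ∃ L : Division n n (d + 1), Coarsens L D ∧ IsAlmostMixedMinor M L := by
  have hcut := cutIndex_apply hb hf
  have hsurj : Function.Surjective (cutIndex b f d) := fun p =>
    ⟨b (f p), hcut p ⟨le_rfl, hf.apply_lt (Nat.lt_succ_self p) p.isLt⟩⟩
  refine ⟨D.coarsen _ (cutIndex_mono f d) hsurj, coarsens_coarsen,
    isAlmostMixedMinor_of_lt hM hD.coarsen fun p q hpq => ?_⟩
  obtain ⟨a, ha, v, hv, c, hc, c', hc', hvc, hvc'⟩ := hf.2.2.2 p q hpq q.isLt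
  obtain ⟨w', hw', hvw'⟩ : ∃ w ∈ D.colBlock (b c'), M v w = false := by
    simpa [FullOnBlock] using hvc'
  obtain ⟨w, hw⟩ := D.col_surj (b c)
  have hac' : a < c' := ha.2.trans_le <| hc'.1.trans' <| hf.apply_le hpq q.isLt.le
  have hc'm : c' < m := hf.2.1 ▸ hc'.2.trans_le (hf.apply_le q.isLt le_rfl)
  obtain ⟨v', hv', hv'w'⟩ := (hH a c' hac' hc'm).exists_row_eq_true
  have hrow : ∀ {x u}, x ∈ Set.Ico (f p) (f (p + 1)) → D.row u = b x →
      u ∈ (D.coarsen _ (cutIndex_mono f d) hsurj).rowBlock p := fun hx hu => by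
    simp [Division.rowBlock, Division.coarsen, hu, hcut p hx]
  have hcol : ∀ {x u}, x ∈ Set.Ico (f q) (f (q + 1)) → D.col u = b x →
      u ∈ (D.coarsen _ (cutIndex_mono f d) hsurj).colBlock q := fun hx hu => by
    simp [Division.colBlock, Division.coarsen, hu, hcut q hx]
  refine mixed_of_ne (hrow ha hv) (hrow ha hv') (hcol hc hw) (hcol hc' hw') ?_ ?_
  · rw [hvc w hw, hvw']
    decide
  · rw [hvw', hv'w' w' hw']
    decide

end HorizontalClique

lemma length_le_cliqueNum_of_isChain {V : Type*} [Fintype V] {G : SimpleGraph V}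
    {e : Fin (Fintype.card V) ≃ V} {s : ℕ} {D : Division (Fintype.card V) (Fintype.card V) s}
    {b : ℕ → Fin s} (hD : D.Symm) {l : List (ℕ × Fin (Fintype.card V))}
    (hl : IsChain (InBlock D b) (FullOnBlock (adjMatrix G e) D b) l) : l.length ≤ G.cliqueNum := by
  have hpair : (l.map fun x => e x.2).Pairwise G.Adj :=
    List.pairwise_map.2 <| hl.2.imp_of_mem fun {x y} _ hy hxy =>
      (adjMatrix_eq_true_iff G e).1 (hxy y.2 (show D.col y.2 = b y.1 from hD ▸ hl.1 y hy))
  simpa using length_le_cliqueNum_of_pairwise_adj G hpair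

theorem cliqueNum_horizCompression_le {V : Type*} [Fintype V] (G : SimpleGraph V)
    (e : Fin (Fintype.card V) ≃ V) (d : ℕ) {s : ℕ}
    {D : Division (Fintype.card V) (Fintype.card V) s} (hD : D.Symm)
    (hno : ¬ ∃ L : Division (Fintype.card V) (Fintype.card V) (d + 1),
      Coarsens L D ∧ IsAlmostMixedMinor (adjMatrix G e) L) :
    (horizCompression (adjMatrix G e) D).cliqueNum ≤ 2 * (G.cliqueNum + d - 1).choose d := by
  obtain ⟨t, ht⟩ := (horizCompression (adjMatrix G e) D).exists_isNClique_cliqueNum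
  rw [← ht.card_eq]
  obtain rfl | hne := t.eq_empty_or_nonempty
  · simp
  obtain ⟨b, hb, hbt⟩ := exists_strictMonoOn_mem_of_nonempty hne
  have hH : ∀ a c, a < c → c < #t →
      HorizNonzero (adjMatrix G e) (D.rowBlock (b a)) (D.colBlock (b c)) := fun a c hac hc => by
    have hbac : b a < b c := hb (Set.mem_Iio.2 (hac.trans hc)) (Set.mem_Iio.2 hc) hac
    exact horizNonzero_of_horizCompression_adj
      (ht.isClique (hbt a (hac.trans hc)) (hbt c hc) hbac.ne) hbac
  have hR : ∀ a < #t, ∃ v, InBlock D b a v := fun a _ => D.row_surj (b a)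
  have hadj : ∀ a c, a < c → c < #t → ∃ v, InBlock D b a v ∧ FullOnBlock (adjMatrix G e) D b v c :=
    fun a c hac hc => (hH a c hac hc).exists_row_eq_true
  obtain ⟨g, hg⟩ : ∃ g, G.cliqueNum = g + 1 := by
    obtain ⟨v, -⟩ := hR 0 hne.card_pos
    have : Nonempty V := ⟨e v⟩
    exact Nat.exists_eq_add_of_le' (one_le_cliqueNum G)
  have hbound := sub_lt_two_mul_choose_of_chainBounded hR hadj d g le_rfl (lo := 0)
    (fun l hl _ => hg ▸ length_le_cliqueNum_of_isChain hD hl)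
    fun ⟨f, hf⟩ =>
      hno (exists_almostMixedMinor_of_isMixedPartition (adjMatrix_isSymm G e) hD hb hH hf)
  rw [hg, show g + 1 + d - 1 = g + d by omega]
  omega

lemma choose_add_sub_one_le_pow (ω d : ℕ) : (ω + d - 1).choose d ≤ ω ^ d := by
  rcases ω with _ | g
  · rcases d with _ | d <;> simp
  · simpa using Nat.choose_add_le_add_one_pow g d

/-- Let `G` be a finite simple graph with clique number `ω`, `M` its
adjacency matrix under some vertex ordering `e`, and `D` a symmetric division of `M`.
If, for some `d ≥ 1`, `M` has no `d`-almost mixed minor that is a coarsening of `D`,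
then the clique number of the horizontal compression satisfies
`ω(G^H_D) ≤ 2 * choose (ω + d - 2) (d - 1)`, and consequently `ω(G^H_D) ≤ 2 * ω^(d-1)`. -/
theorem clique_horiz_compression {V : Type} [Fintype V] (G : SimpleGraph V)
    (e : Fin (Fintype.card V) ≃ V) (d : ℕ) (hd : 1 ≤ d)
    {s : ℕ} (D : Division (Fintype.card V) (Fintype.card V) s) (hD : D.Symm)
    (hno : ¬ ∃ L : Division (Fintype.card V) (Fintype.card V) d,
      Coarsens L D ∧ IsAlmostMixedMinor (adjMatrix G e) L) :
    (horizCompression (adjMatrix G e) D).cliqueNum ≤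
        2 * Nat.choose (G.cliqueNum + d - 2) (d - 1) ∧
    (horizCompression (adjMatrix G e) D).cliqueNum ≤ 2 * G.cliqueNum ^ (d - 1) := by
  obtain ⟨d, rfl⟩ := Nat.exists_eq_add_of_le' hd
  have hbound := cliqueNum_horizCompression_le G e d hD hno
  rw [Nat.add_sub_cancel, show G.cliqueNum + (d + 1) - 2 = G.cliqueNum + d - 1 by omega]
  exact ⟨hbound, hbound.trans (Nat.mul_le_mul_left 2 (choose_add_sub_one_le_pow _ d))⟩

end TwPaper
end

section
/- Let G be a finite simple graph with clique number ω, let M be the adjacency matrix of G under some linear ordering of its vertices, and let D be a symmetric division of M. Suppose that, for some integer d ≥ 1, M has no d-almost mixed minor that is a coarsening of D. Then the clique number of the vertical compression G^V_D satisfies ω(G^V_D) ≤ 2ω^(d−1). -/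
namespace TwPaper


section ClaimAux

/-- Bound function for the recursion. -/
def eBound : ℕ → ℕ → ℕ
  | 0, _ => 0
  | c+1, w => 1 + ∑ t ∈ Finset.Icc 2 w, (eBound c t + 1)

lemma eBound_zero_right (c : ℕ) : eBound (c+1) 0 = 1 := by
  rw [eBound, show Finset.Icc 2 0 = ∅ from Finset.Icc_eq_empty (by omega)]
  simp

lemma eBound_one_right (c : ℕ) : eBound (c+1) 1 = 1 := by
  rw [eBound, show Finset.Icc 2 1 = ∅ from Finset.Icc_eq_empty (by omega)]
  simp

lemma eBound_pos (c w : ℕ) : 1 ≤ eBound (c+1) w := by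
  rw [eBound]; omega

lemma eBound_succ (c w : ℕ) (hw : 1 ≤ w) :
    eBound (c+1) (w+1) = eBound (c+1) w + (eBound c (w+1) + 1) := by
  have h : Finset.Icc 2 (w+1) = insert (w+1) (Finset.Icc 2 w) :=
    (Finset.insert_Icc_right_eq_Icc_add_one (by omega)).symm
  have hnotmem : w + 1 ∉ Finset.Icc 2 w := by simp
  rw [eBound, eBound, h, Finset.sum_insert hnotmem]
  ring

lemma eBound_le_pow (c : ℕ) : ∀ w : ℕ, 1 ≤ w → eBound c w ≤ 2 * w ^ c := by
  induction c with
  | zero => intro w hw; simp [eBound]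
  | succ c ih =>
    intro w hw
    rcases Nat.eq_zero_or_pos c with rfl | hc
    · -- eBound 1 w = 1 + (w - 1) ≤ 2 * w
      rw [eBound]
      have hsum : ∑ t ∈ Finset.Icc 2 w, (eBound 0 t + 1) = w + 1 - 2 := by
        have : ∀ t ∈ Finset.Icc 2 w, eBound 0 t + 1 = 1 := by intro t _; simp [eBound]
        rw [Finset.sum_congr rfl this, Finset.sum_const, Nat.card_Icc, smul_eq_mul, mul_one]
      rw [hsum, pow_one]
      omega
    · have hterm : ∀ t ∈ Finset.Icc 2 w, eBound c t + 1 ≤ 2 * w ^ c + 1 := by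
        intro t ht
        rw [Finset.mem_Icc] at ht
        have h1 := ih t (by omega)
        have h2 : t ^ c ≤ w ^ c := Nat.pow_le_pow_left ht.2 c
        omega
      have hsum : ∑ t ∈ Finset.Icc 2 w, (eBound c t + 1) ≤ (w + 1 - 2) * (2 * w ^ c + 1) := by
        calc ∑ t ∈ Finset.Icc 2 w, (eBound c t + 1)
            ≤ ∑ _t ∈ Finset.Icc 2 w, (2 * w ^ c + 1) := Finset.sum_le_sum hterm
          _ = (w + 1 - 2) * (2 * w ^ c + 1) := by
              rw [Finset.sum_const, Nat.card_Icc, smul_eq_mul]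
      rw [eBound]
      obtain ⟨x, rfl⟩ : ∃ x, w = x + 1 := ⟨w - 1, by omega⟩
      have hx2 : x + 1 + 1 - 2 = x := by omega
      rw [hx2] at hsum
      have hy2 : x + 1 ≤ 2 * (x + 1) ^ c := by
        have h3 : x + 1 ≤ (x + 1) ^ c := Nat.le_self_pow (by omega) _
        omega
      have hpow : (x+1) ^ (c+1) = (x+1) ^ c * (x+1) := pow_succ _ _
      have h5 : 1 + x * (2 * (x+1) ^ c + 1) = 2 * (x * (x+1) ^ c) + (x + 1) := by ring
      have h6 : 2 * ((x+1) ^ c * (x+1)) = 2 * (x * (x+1) ^ c) + 2 * (x+1) ^ c := by ring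
      calc 1 + ∑ t ∈ Finset.Icc 2 (x+1), (eBound c t + 1)
          ≤ 1 + x * (2 * (x+1) ^ c + 1) := by omega
        _ ≤ 2 * (x+1) ^ (c+1) := by rw [hpow]; linarith

lemma steps_le {m : ℕ → ℕ} {N : ℕ} (h : ∀ i, i ≤ N → m i < m (i+1)) :
    ∀ j, j ≤ N + 1 → ∀ i, i ≤ j → m i ≤ m j := by
  intro j
  induction j with
  | zero => intro _ i hi; obtain rfl : i = 0 := Nat.le_zero.mp hi; exact le_rfl
  | succ j ih =>
    intro hj i hi
    rcases Nat.eq_or_lt_of_le hi with rfl | hlt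
    · exact le_rfl
    · exact le_trans (ih (by omega) i (by omega)) (le_of_lt (h j (by omega)))

lemma steps_lt {m : ℕ → ℕ} {N : ℕ} (h : ∀ i, i ≤ N → m i < m (i+1)) :
    ∀ j, j ≤ N + 1 → ∀ i, i < j → m i < m j := by
  intro j hj i hi
  have h1 : m (i+1) ≤ m j := steps_le h j hj (i+1) hi
  have h2 : m i < m (i+1) := h i (by omega)
  omega

def Comp {n : ℕ} (M : BMatrix n n) (S : Set (Fin n)) (b : Fin n) : Prop := ∀ a ∈ S, M a b = true
def Anti {n : ℕ} (M : BMatrix n n) (S : Set (Fin n)) (b : Fin n) : Prop := ∀ a ∈ S, M a b = false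

def SplitP {n s : ℕ} (M : BMatrix n n) (block : Fin s → Set (Fin n)) (K : ℕ → Fin s)
    (P Q : Set ℕ) : Prop :=
  ∃ p ∈ P, ∃ p' ∈ P, ∃ q ∈ Q, ∃ b ∈ block (K q), Comp M (block (K p)) b ∧ Anti M (block (K p')) b

lemma splitP_mono {n s : ℕ} {M : BMatrix n n} {block : Fin s → Set (Fin n)} {K : ℕ → Fin s}
    {P Q Q' : Set ℕ} (h : SplitP M block K P Q) (hQ : Q ⊆ Q') : SplitP M block K P Q' := by
  obtain ⟨p, hp, p', hp', q, hq, b, hb, h1, h2⟩ := h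
  exact ⟨p, hp, p', hp', q, hQ hq, b, hb, h1, h2⟩

lemma claim {n s : ℕ} (M : BMatrix n n) (block : Fin s → Set (Fin n)) (K : ℕ → Fin s)
    (hM : ∀ i j, M i j = M j i)
    (hblock : ∀ t, (block t).Nonempty)
    (hdisj : ∀ x t t', x ∈ block t → x ∈ block t' → t = t') :
    ∀ (c w lo hi : ℕ),
      (∀ p q, lo ≤ p → p < q → q < hi → K p < K q) →
      (∀ p q, lo ≤ p → p < q → q < hi → ∀ b ∈ block (K q),
          Comp M (block (K p)) b ∨ Anti M (block (K p)) b) →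
      (∀ p q, lo ≤ p → p < q → q < hi → ∃ b ∈ block (K q), Comp M (block (K p)) b) →
      (∀ Y : Finset (Fin n), (∀ x ∈ Y, ∃ p, lo ≤ p ∧ p < hi ∧ x ∈ block (K p)) →
          ((Y : Set (Fin n)).Pairwise fun x y => M x y = true) → Y.card ≤ w) →
      lo + (eBound c w + 1) ≤ hi →
      ∃ m : ℕ → ℕ, m 0 = lo ∧ m (c+1) = hi ∧ (∀ i, i ≤ c → m i < m (i+1)) ∧
        ∀ α β, α < β → β ≤ c →
          SplitP M block K (Set.Ico (m α) (m (α+1))) (Set.Ico (m β) (m (β+1))) := by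
  intro c
  induction c with
  | zero =>
    intro w lo hi _ _ _ _ hsize
    have he : eBound 0 w = 0 := rfl
    refine ⟨fun i => if i = 0 then lo else hi, by simp, by simp, ?_, ?_⟩
    · intro i hic
      obtain rfl : i = 0 := Nat.le_zero.mp hic
      simp
      omega
    · intro α β hαβ hβ
      omega
  | succ c ihc =>
    intro w
    induction w with
    | zero =>
      intro lo hi hK hV hN hW hsize
      exfalso
      have he := eBound_zero_right c
      obtain ⟨x, hx⟩ := hblock (K lo)
      have h1 := hW {x} ?_ ?_
      · simp at h1
      · intro y hy
        rw [Finset.mem_singleton] at hy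
        subst hy
        exact ⟨lo, le_rfl, by omega, hx⟩
      · simp
    | succ w ihw =>
      intro lo hi hK hV hN hW hsize
      rcases Nat.eq_zero_or_pos w with rfl | hw1
      · -- w + 1 = 1 : find a 2-clique, contradiction
        exfalso
        have he : eBound (c+1) (0+1) = 1 := eBound_one_right c
        have h2 : lo + 1 < hi := by omega
        obtain ⟨b, hb, hbc⟩ := hN lo (lo+1) le_rfl (by omega) h2
        obtain ⟨a, ha⟩ := hblock (K lo)
        have hne : a ≠ b := by
          intro hab
          subst hab
          exact absurd (hdisj a _ _ ha hb) (ne_of_lt (hK lo (lo+1) le_rfl (by omega) h2))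
        have h1 := hW {a, b} ?_ ?_
        · rw [Finset.card_pair hne] at h1; omega
        · intro y hy
          rcases Finset.mem_insert.mp hy with rfl | hy
          · exact ⟨lo, le_rfl, by omega, ha⟩
          · rw [Finset.mem_singleton] at hy
            subst hy
            exact ⟨lo + 1, by omega, h2, hb⟩
        · intro x hx y hy hxy
          simp only [Finset.coe_insert, Set.mem_insert_iff, Finset.coe_singleton,
            Set.mem_singleton_iff] at hx hy
          rcases hx with rfl | rfl <;> rcases hy with rfl | rfl
          · exact absurd rfl hxy
          · exact hbc x ha
          · rw [hM]; exact hbc y ha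
          · exact absurd rfl hxy
      · -- main case : w ≥ 1, proving for w + 1
        have hid := eBound_succ c w hw1
        have hpos1 := eBound_pos c w
        have hpos2 := eBound_pos c (w+1)
        set r := hi - (eBound c (w+1) + 1) with hr
        have hr1 : lo + (eBound (c+1) w + 1) ≤ r := by omega
        have hr2 : r + (eBound c (w+1) + 1) = hi := by omega
        have hlor : lo < r := by omega
        obtain ⟨mA, hA0, hAtop, hAst, hApairs⟩ :=
          ihc (w+1) r hi (fun p q hp => hK p q (by omega))
            (fun p q hp => hV p q (by omega)) (fun p q hp => hN p q (by omega))
            (fun Y hmem hpw => hW Y (fun x hx => by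
              obtain ⟨p, h1, h2, h3⟩ := hmem x hx; exact ⟨p, by omega, h2, h3⟩) hpw)
            (by omega)
        by_cases hsplit : ∀ β, β ≤ c → SplitP M block K (Set.Ico lo r)
            (Set.Ico (mA β) (mA (β+1)))
        · -- Case 1 : prepend [lo, r) as a first part
          refine ⟨fun i => match i with | 0 => lo | (i+1) => mA i, rfl, hAtop, ?_, ?_⟩
          · intro i hic2
            match i with
            | 0 =>
              show lo < mA 0
              rw [hA0]; exact hlor
            | (i+1) => exact hAst i (by omega)
          · intro α β hαβ hβ
            match α, β with
            | _, 0 => omega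
            | 0, (β+1) =>
              have hh := hsplit β (by omega)
              show SplitP M block K (Set.Ico lo (mA 0)) (Set.Ico (mA β) (mA (β+1)))
              rw [hA0]
              exact hh
            | (α+1), (β+1) => exact hApairs α β (by omega) (by omega)
        · -- Case 2 : some part of A is homogeneous over [lo, r)
          push_neg at hsplit
          obtain ⟨β, hβc, hnsp⟩ := hsplit
          have hq1 : r ≤ mA β := by
            have := steps_le hAst β (by omega) 0 (by omega)
            omega
          have hq2 : mA β < hi := by
            have h3 := hAst β hβc
            have h4 : mA (β+1) ≤ mA (c+1) := steps_le hAst (c+1) le_rfl (β+1) (by omega)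
            omega
          obtain ⟨b, hbm, hbc⟩ := hN lo (mA β) le_rfl (by omega) hq2
          have hball : ∀ p, lo ≤ p → p < r → Comp M (block (K p)) b := by
            intro p hp hpr
            rcases hV p (mA β) hp (by omega) hq2 b hbm with h | h
            · exact h
            · exact absurd ⟨lo, ⟨le_rfl, hlor⟩, p, ⟨hp, hpr⟩, mA β,
                ⟨le_rfl, hAst β hβc⟩, b, hbm, hbc, h⟩ hnsp
          have hW' : ∀ Y : Finset (Fin n), (∀ x ∈ Y, ∃ p, lo ≤ p ∧ p < r ∧ x ∈ block (K p)) →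
              ((Y : Set (Fin n)).Pairwise fun x y => M x y = true) → Y.card ≤ w := by
            intro Y hmem hpw
            have hbY : b ∉ Y := by
              intro hbY
              obtain ⟨p, hp1, hp2, hbp⟩ := hmem b hbY
              exact absurd (hdisj b _ _ hbp hbm)
                (ne_of_lt (hK p (mA β) hp1 (by omega) hq2))
            have h2 : (insert b Y).card ≤ w + 1 := by
              apply hW
              · intro x hx
                rcases Finset.mem_insert.mp hx with rfl | hx
                · exact ⟨mA β, by omega, hq2, hbm⟩
                · obtain ⟨p, h1, h2, h3⟩ := hmem x hx
                  exact ⟨p, h1, by omega, h3⟩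
              · rw [Finset.coe_insert]
                intro x hx y hy hxy
                rcases Set.mem_insert_iff.mp hx with rfl | hx' <;>
                  rcases Set.mem_insert_iff.mp hy with rfl | hy'
                · exact absurd rfl hxy
                · obtain ⟨p, h1, h2, h3⟩ := hmem y hy'
                  rw [hM]
                  exact hball p h1 h2 y h3
                · obtain ⟨p, h1, h2, h3⟩ := hmem x hx'
                  exact hball p h1 h2 x h3
                · exact hpw hx' hy' hxy
            rw [Finset.card_insert_of_notMem hbY] at h2
            omega
          obtain ⟨mR, hR0, hRtop, hRst, hRpairs⟩ :=
            ihw lo r (fun p q hp hpq hq => hK p q hp hpq (by omega))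
              (fun p q hp hpq hq => hV p q hp hpq (by omega))
              (fun p q hp hpq hq => hN p q hp hpq (by omega)) hW' (by omega)
          have hrhi : r ≤ hi := by omega
          refine ⟨fun i => if i = c + 2 then hi else mR i, ?_, ?_, ?_, ?_⟩
          · show (if 0 = c + 2 then hi else mR 0) = lo
            rw [if_neg (by omega : (0:ℕ) ≠ c + 2)]
            exact hR0
          · show (if c + 1 + 1 = c + 2 then hi else mR (c + 1 + 1)) = hi
            rw [if_pos (by omega)]
          · intro i hic2
            show (if i = c + 2 then hi else mR i) < (if i + 1 = c + 2 then hi else mR (i + 1))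
            by_cases h : i + 1 = c + 2
            · rw [if_neg (by omega : ¬ i = c + 2), if_pos h]
              have h3 := hRst i (by omega)
              have h4 : mR (i+1) = r := by rw [h]; exact hRtop
              omega
            · rw [if_neg (by omega : ¬ i = c + 2), if_neg h]
              exact hRst i (by omega)
          · intro α β hαβ hβ
            have hα2 : ¬ α = c + 2 := by omega
            have hα12 : ¬ α + 1 = c + 2 := by omega
            show SplitP M block K
              (Set.Ico (if α = c + 2 then hi else mR α) (if α + 1 = c + 2 then hi else mR (α + 1)))
              (Set.Ico (if β = c + 2 then hi else mR β) (if β + 1 = c + 2 then hi else mR (β + 1)))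
            by_cases hb2 : β + 1 = c + 2
            · rw [if_neg hα2, if_neg hα12, if_neg (by omega : ¬ β = c + 2), if_pos hb2]
              apply splitP_mono (hRpairs α β hαβ (by omega))
              apply Set.Ico_subset_Ico le_rfl
              have h4 : mR (β+1) = r := by rw [show β + 1 = c + 2 from hb2]; exact hRtop
              omega
            · rw [if_neg hα2, if_neg hα12, if_neg (by omega : ¬ β = c + 2), if_neg hb2]
              exact hRpairs α β hαβ (by omega)

end ClaimAux

lemma mixed_flip {n : ℕ} {M : BMatrix n n} (hM : ∀ i j, M i j = M j i) {R C : Set (Fin n)}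
    (h : Mixed M R C) : Mixed M C R := by
  obtain ⟨hH, hV⟩ := h
  constructor
  · intro hH'
    exact hV (fun j hj i hi i' hi' => by
      rw [hM i j, hM i' j]; exact hH' j hj i hi i' hi')
  · intro hV'
    exact hH (fun i hi j hj j' hj' => by
      rw [hM i j, hM i j']; exact hV' i hi j hj j' hj')

/-- Let `G` be a finite simple graph with clique number `ω`, `M` its
adjacency matrix under some vertex ordering `e`, and `D` a symmetric division of `M`.
If, for some `d ≥ 1`, `M` has no `d`-almost mixed minor that is a coarsening of `D`,
then the clique number of the vertical compression satisfies `ω(G^V_D) ≤ 2 * ω^(d-1)`. -/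
theorem clique_vert_compression {V : Type} [Fintype V] (G : SimpleGraph V)
    (e : Fin (Fintype.card V) ≃ V) (d : ℕ) (hd : 1 ≤ d)
    {s : ℕ} (D : Division (Fintype.card V) (Fintype.card V) s) (hD : D.Symm)
    (hno : ¬ ∃ L : Division (Fintype.card V) (Fintype.card V) d,
      Coarsens L D ∧ IsAlmostMixedMinor (adjMatrix G e) L) :
    (vertCompression (adjMatrix G e) D).cliqueNum ≤ 2 * G.cliqueNum ^ (d - 1) := by
  classical
  set M := adjMatrix G e with hMdef
  have hM : ∀ i j, M i j = M j i := by
    intro i j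
    show (if G.Adj (e i) (e j) then true else false) = (if G.Adj (e j) (e i) then true else false)
    by_cases h : G.Adj (e i) (e j)
    · rw [if_pos h, if_pos h.symm]
    · rw [if_neg h, if_neg fun h' => h h'.symm]
  obtain ⟨S, hS⟩ := (vertCompression M D).exists_isNClique_cliqueNum
  rw [← hS.card_eq]
  by_contra hcard
  push_neg at hcard
  set k := S.card with hk
  have hk1 : 1 ≤ k := by omega
  set f := S.orderEmbOfFin (rfl : S.card = k) with hf
  set K : ℕ → Fin s := fun t => f ⟨min t (k-1), by omega⟩ with hKdef
  have hKmem : ∀ t, K t ∈ S := fun t => S.orderEmbOfFin_mem _ _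
  have hKlt : ∀ p q, p < q → q < k → K p < K q := by
    intro p q hpq hq
    apply f.strictMono
    show (min p (k-1)) < (min q (k-1))
    omega
  have hVN : ∀ p q, p < q → q < k →
      VertNonzero M (D.rowBlock (K p)) (D.colBlock (K q)) := by
    intro p q hpq hq
    have hne : K p ≠ K q := ne_of_lt (hKlt p q hpq hq)
    have hadj : (vertCompression M D).Adj (K p) (K q) :=
      hS.1 (Finset.mem_coe.mpr (hKmem p)) (Finset.mem_coe.mpr (hKmem q)) hne
    rw [vertCompression, SimpleGraph.fromRel_adj] at hadj
    rcases hadj.2 with h | h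
    · exact h.2
    · exact absurd h.1 (not_lt.mpr (le_of_lt (hKlt p q hpq hq)))
  have hcr : ∀ t, D.colBlock t = D.rowBlock t := by
    intro t
    unfold Division.colBlock Division.rowBlock
    rw [← hD]
  have hblock : ∀ t, (D.rowBlock t).Nonempty := by
    intro t
    obtain ⟨a, ha⟩ := D.row_surj t
    exact ⟨a, ha⟩
  have hdisj : ∀ x t t', x ∈ D.rowBlock t → x ∈ D.rowBlock t' → t = t' := by
    intro x t t' h1 h2
    have h1' : D.row x = t := h1
    have h2' : D.row x = t' := h2
    rw [← h1', ← h2']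
  -- the Vertical / Nonzero / clique-bound facts
  have hVf : ∀ p q, p < q → q < k → ∀ b ∈ D.rowBlock (K q),
      Comp M (D.rowBlock (K p)) b ∨ Anti M (D.rowBlock (K p)) b := by
    intro p q hpq hq b hb
    have hvert := (hVN p q hpq hq).1
    have hb' : b ∈ D.colBlock (K q) := by rw [hcr]; exact hb
    obtain ⟨a0, ha0⟩ := hblock (K p)
    cases hval : M a0 b with
    | false =>
      right
      intro a ha
      rw [hvert b hb' a ha a0 ha0, hval]
    | true =>
      left
      intro a ha
      rw [hvert b hb' a ha a0 ha0, hval]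
  have hNf : ∀ p q, p < q → q < k → ∃ b ∈ D.rowBlock (K q), Comp M (D.rowBlock (K p)) b := by
    intro p q hpq hq
    have hvert := (hVN p q hpq hq).1
    have hnz := (hVN p q hpq hq).2
    unfold ConstantZero at hnz
    push_neg at hnz
    obtain ⟨a, ha, b, hb, hab⟩ := hnz
    refine ⟨b, by rw [← hcr]; exact hb, ?_⟩
    intro a' ha'
    rw [hvert b hb a' ha' a ha]
    simpa using hab
  have hWf : ∀ Y : Finset (Fin (Fintype.card V)),
      (∀ x ∈ Y, ∃ p, 0 ≤ p ∧ p < k ∧ x ∈ D.rowBlock (K p)) →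
      ((Y : Set (Fin (Fintype.card V))).Pairwise fun x y => M x y = true) →
      Y.card ≤ G.cliqueNum := by
    intro Y _ hpw
    have himg : G.IsClique (Y.image e) := by
      intro u hu v hv huv
      simp only [Finset.coe_image, Set.mem_image, Finset.mem_coe] at hu hv
      obtain ⟨x, hx, rfl⟩ := hu
      obtain ⟨y, hy, rfl⟩ := hv
      have hxy : x ≠ y := fun h => huv (by rw [h])
      have hMxy := hpw (Finset.mem_coe.mpr hx) (Finset.mem_coe.mpr hy) hxy
      by_contra hadj
      have : M x y = false := by
        show (if G.Adj (e x) (e y) then true else false) = false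
        rw [if_neg hadj]
      have hMxy2 : M x y = true := hMxy
      rw [this] at hMxy2
      exact Bool.noConfusion hMxy2
    have hc2 : (Y.image e).card = Y.card := Finset.card_image_of_injective Y e.injective
    have h3 : (Y.image e).card ≤ G.cliqueNum :=
      SimpleGraph.IsClique.card_le_cliqueNum (tc := himg)
    omega
  have hω : 1 ≤ G.cliqueNum := by
    obtain ⟨a, _⟩ := hblock (K 0)
    have h1 : G.IsClique ({e a} : Finset V) := by
      rw [Finset.coe_singleton]
      exact Set.pairwise_singleton _ _
    have h2 : ({e a} : Finset V).card ≤ G.cliqueNum :=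
      SimpleGraph.IsClique.card_le_cliqueNum (tc := h1)
    simpa using h2
  obtain ⟨c, rfl⟩ : ∃ c, d = c + 1 := ⟨d - 1, by omega⟩
  simp only [Nat.add_sub_cancel] at hcard
  have hsize : 0 + (eBound c G.cliqueNum + 1) ≤ k := by
    have := eBound_le_pow c G.cliqueNum hω
    omega
  obtain ⟨m, hm0, hmtop, hmst, hmpairs⟩ :=
    claim M D.rowBlock K hM hblock hdisj c G.cliqueNum 0 k
      (fun p q _ => hKlt p q) (fun p q _ => hVf p q) (fun p q _ => hNf p q)
      hWf hsize
  -- build the coarsened division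
  have hmk : ∀ j, j ≤ c + 1 → m j ≤ k := by
    intro j hj
    have := steps_le hmst (c+1) le_rfl j hj
    omega
  have hpilt : ∀ t : Fin s, ((Finset.Icc 1 c).filter (fun γ => K (m γ) ≤ t)).card < c + 1 := by
    intro t
    have h1 := Finset.card_filter_le (Finset.Icc 1 c) (fun γ => K (m γ) ≤ t)
    rw [Nat.card_Icc] at h1
    omega
  set pIdx : Fin s → Fin (c+1) :=
    fun t => ⟨((Finset.Icc 1 c).filter (fun γ => K (m γ) ≤ t)).card, hpilt t⟩ with hpIdx
  have hpimono : Monotone pIdx := by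
    intro t t' htt'
    show ((Finset.Icc 1 c).filter (fun γ => K (m γ) ≤ t)).card ≤
      ((Finset.Icc 1 c).filter (fun γ => K (m γ) ≤ t')).card
    apply Finset.card_le_card
    intro γ hγ
    rw [Finset.mem_filter] at hγ ⊢
    exact ⟨hγ.1, le_trans hγ.2 htt'⟩
  have hpart : ∀ (α : ℕ), α ≤ c → ∀ p, m α ≤ p → p < m (α+1) → (pIdx (K p)).val = α := by
    intro α hα p h1 h2
    have hpk : p < k := by
      have := hmk (α+1) (by omega)
      omega
    show ((Finset.Icc 1 c).filter (fun γ => K (m γ) ≤ K p)).card = α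
    have hflt : (Finset.Icc 1 c).filter (fun γ => K (m γ) ≤ K p) = Finset.Icc 1 α := by
      ext γ
      simp only [Finset.mem_filter, Finset.mem_Icc]
      constructor
      · rintro ⟨⟨hγ1, hγc⟩, hle⟩
        refine ⟨hγ1, ?_⟩
        by_contra hcon
        push_neg at hcon
        have h5 : m (α+1) ≤ m γ := steps_le hmst γ (by omega) (α+1) (by omega)
        have h6 : m γ < k := by
          have := steps_lt hmst (c+1) le_rfl γ (by omega)
          omega
        have h7 := hKlt p (m γ) (by omega) h6
        exact absurd hle (not_le.mpr h7)
      · rintro ⟨hγ1, hγα⟩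
        refine ⟨⟨hγ1, by omega⟩, ?_⟩
        have h5 : m γ ≤ p := le_trans (steps_le hmst α (by omega) γ hγα) h1
        rcases Nat.eq_or_lt_of_le h5 with heq | hlt
        · rw [heq]
        · exact le_of_lt (hKlt (m γ) p hlt hpk)
    rw [hflt, Nat.card_Icc]
    omega
  have hpisurj : Function.Surjective pIdx := by
    intro α
    refine ⟨K (m α.val), ?_⟩
    have hα : α.val ≤ c := Nat.lt_succ_iff.mp α.isLt
    exact Fin.ext (hpart α.val hα (m α.val) le_rfl (hmst α.val hα))
  apply hno
  refine ⟨⟨pIdx ∘ D.row, pIdx ∘ D.col, hpimono.comp D.row_mono, hpimono.comp D.col_mono,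
    hpisurj.comp D.row_surj, hpisurj.comp D.col_surj⟩,
    ⟨fun a a' h => congrArg pIdx h, fun b b' h => congrArg pIdx h⟩, ?_⟩
  -- almost mixed minor
  have hmix : ∀ (i j : Fin (c+1)), i < j →
      Mixed M {a | pIdx (D.row a) = i} {b | pIdx (D.row b) = j} := by
    intro i j hij
    have hijv : i.val < j.val := hij
    have hjc : j.val ≤ c := Nat.lt_succ_iff.mp j.isLt
    obtain ⟨p, hp, p', hp', q, hq, b, hb, hbc, hba⟩ := hmpairs i.val j.val hijv hjc
    obtain ⟨hp1, hp2⟩ := hp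
    obtain ⟨hp'1, hp'2⟩ := hp'
    obtain ⟨hq1, hq2⟩ := hq
    have hpq' : p' < q := by
      have h5 : m (i.val + 1) ≤ m j.val := steps_le hmst j.val (by omega) (i.val+1) (by omega)
      omega
    have hqk : q < k := by
      have := hmk (j.val + 1) (by omega)
      omega
    obtain ⟨u, hu, huc⟩ := hNf p' q hpq' hqk
    obtain ⟨a, ha⟩ := hblock (K p)
    obtain ⟨a', ha'⟩ := hblock (K p')
    have hic : i.val ≤ c := by omega
    have hmema : pIdx (D.row a) = i := by
      have ha2 : D.row a = K p := ha
      rw [ha2]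
      exact Fin.ext (hpart i.val hic p hp1 hp2)
    have hmema' : pIdx (D.row a') = i := by
      have ha2 : D.row a' = K p' := ha'
      rw [ha2]
      exact Fin.ext (hpart i.val hic p' hp'1 hp'2)
    have hmemb : pIdx (D.row b) = j := by
      have hb2 : D.row b = K q := hb
      rw [hb2]
      exact Fin.ext (hpart j.val hjc q hq1 hq2)
    have hmemu : pIdx (D.row u) = j := by
      have hu2 : D.row u = K q := hu
      rw [hu2]
      exact Fin.ext (hpart j.val hjc q hq1 hq2)
    constructor
    · intro hH
      have hcontr := hH a' hmema' b hmemb u hmemu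
      rw [hba a' ha', huc a' ha'] at hcontr
      exact Bool.noConfusion hcontr
    · intro hVt
      have hcontr := hVt b hmemb a hmema a' hmema'
      rw [hbc a ha, hba a' ha'] at hcontr
      exact Bool.noConfusion hcontr
  intro i j hij
  unfold Division.ZoneMixed
  have hrb : ∀ t : Fin (c+1),
      Division.rowBlock ⟨pIdx ∘ D.row, pIdx ∘ D.col, hpimono.comp D.row_mono,
        hpimono.comp D.col_mono, hpisurj.comp D.row_surj, hpisurj.comp D.col_surj⟩ t
      = {a | pIdx (D.row a) = t} := fun t => rfl
  have hcb : ∀ t : Fin (c+1),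
      Division.colBlock ⟨pIdx ∘ D.row, pIdx ∘ D.col, hpimono.comp D.row_mono,
        hpimono.comp D.col_mono, hpisurj.comp D.row_surj, hpisurj.comp D.col_surj⟩ t
      = {b | pIdx (D.row b) = t} := by
    intro t
    show {b | pIdx (D.col b) = t} = {b | pIdx (D.row b) = t}
    rw [← hD]
  rw [hrb, hcb]
  rcases lt_or_gt_of_ne hij with h | h
  · exact hmix i j h
  · exact mixed_flip hM (hmix j i h)


end TwPaper
end

section
/- Let d ≥ 2 be an integer, let M be a graphic matrix that is d-almost mixed-free, and let D be a symmetric division of M. Then the adjacency matrices M^H_D and M^V_D of the horizontal and vertical compressions of M along D (rows and columns in the natural order) are both d-almost mixed-free. -/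
namespace TwPaper


section Aux

variable {n s d : ℕ}

private lemma bool_ext {a b : Bool} (h : (a = true) ↔ (b = true)) : a = b := by
  cases a <;> cases b <;> simp_all

/-- The union of the row blocks of `D` indexed by `S`. -/
def bigSet (D : Division n n s) (S : Set (Fin s)) : Set (Fin n) :=
  {a | D.row a ∈ S}

lemma mem_big {D : Division n n s} {a : Fin n} {i : Fin s} {S : Set (Fin s)}
    (ha : a ∈ D.rowBlock i) (hi : i ∈ S) : a ∈ bigSet D S := by
  have ha' : D.row a = i := ha
  show D.row a ∈ S
  rw [ha']; exact hi

lemma colBlock_eq {D : Division n n s} (hD : D.Symm) (j : Fin s) :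
    D.colBlock j = D.rowBlock j := by
  unfold Division.colBlock Division.rowBlock
  rw [hD]

lemma horiz_swap (M : BMatrix n n) (hM : Graphic M) (X Y : Set (Fin n)) :
    Horizontal M Y X ↔ Vertical M X Y := by
  constructor
  · intro h j hj a ha a' ha'
    rw [hM.1 a j, hM.1 a' j]
    exact h j hj a ha a' ha'
  · intro h a ha b hb b' hb'
    rw [hM.1 a b, hM.1 a b']
    exact h a ha b hb b' hb'

lemma zero_swap (M : BMatrix n n) (hM : Graphic M) (X Y : Set (Fin n)) :
    ConstantZero M Y X ↔ ConstantZero M X Y := by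
  constructor <;> intro h a ha b hb
  · rw [hM.1 a b]; exact h b hb a ha
  · rw [hM.1 a b]; exact h b hb a ha

lemma graphMatrix_eq_true {s : ℕ} (G : SimpleGraph (Fin s)) (i j : Fin s) :
    graphMatrix G i j = true ↔ G.Adj i j := by
  by_cases h : G.Adj i j <;> simp [graphMatrix, h]

lemma horiz_entry {M : BMatrix n n} (hM : Graphic M) {D : Division n n s} (hD : D.Symm)
    (i j : Fin s) :
    graphMatrix (horizCompression M D) i j = true ↔
      i ≠ j ∧
        ((i < j ∧ Horizontal M (D.rowBlock i) (D.rowBlock j) ∧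
            ¬ ConstantZero M (D.rowBlock i) (D.rowBlock j)) ∨
          (j < i ∧ Vertical M (D.rowBlock i) (D.rowBlock j) ∧
            ¬ ConstantZero M (D.rowBlock i) (D.rowBlock j))) := by
  rw [graphMatrix_eq_true]
  unfold horizCompression
  rw [SimpleGraph.fromRel_adj]
  unfold HorizNonzero
  rw [colBlock_eq hD, colBlock_eq hD]
  have h1 := horiz_swap M hM (D.rowBlock i) (D.rowBlock j)
  have h2 := zero_swap M hM (D.rowBlock i) (D.rowBlock j)
  tauto

lemma vert_entry {M : BMatrix n n} (hM : Graphic M) {D : Division n n s} (hD : D.Symm)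
    (i j : Fin s) :
    graphMatrix (vertCompression M D) i j = true ↔
      i ≠ j ∧
        ((i < j ∧ Vertical M (D.rowBlock i) (D.rowBlock j) ∧
            ¬ ConstantZero M (D.rowBlock i) (D.rowBlock j)) ∨
          (j < i ∧ Horizontal M (D.rowBlock i) (D.rowBlock j) ∧
            ¬ ConstantZero M (D.rowBlock i) (D.rowBlock j))) := by
  rw [graphMatrix_eq_true]
  unfold vertCompression
  rw [SimpleGraph.fromRel_adj]
  unfold VertNonzero
  rw [colBlock_eq hD, colBlock_eq hD]
  have h1 := horiz_swap M hM (D.rowBlock j) (D.rowBlock i)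
  have h2 := zero_swap M hM (D.rowBlock j) (D.rowBlock i)
  tauto

variable {M : BMatrix n n} {D : Division n n s} {SA SB : Set (Fin s)} {i i' j j' : Fin s}

lemma horiz_sub (h : Horizontal M (bigSet D SA) (bigSet D SB)) (hi : i ∈ SA) (hj : j ∈ SB) :
    Horizontal M (D.rowBlock i) (D.rowBlock j) := fun a ha b hb b' hb' =>
  h a (mem_big ha hi) b (mem_big hb hj) b' (mem_big hb' hj)

lemma vert_sub (h : Vertical M (bigSet D SA) (bigSet D SB)) (hi : i ∈ SA) (hj : j ∈ SB) :
    Vertical M (D.rowBlock i) (D.rowBlock j) := fun b hb a ha a' ha' =>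
  h b (mem_big hb hj) a (mem_big ha hi) a' (mem_big ha' hi)

lemma vert_trans (h : Horizontal M (bigSet D SA) (bigSet D SB)) (hi : i ∈ SA)
    (hj : j ∈ SB) (hj' : j' ∈ SB) (hv : Vertical M (D.rowBlock i) (D.rowBlock j)) :
    Vertical M (D.rowBlock i) (D.rowBlock j') := by
  obtain ⟨b, hb0⟩ := D.row_surj j
  have hb : b ∈ D.rowBlock j := hb0
  intro b' hb' a ha a' ha'
  calc M a b' = M a b := (h a (mem_big ha hi) b (mem_big hb hj) b' (mem_big hb' hj')).symm
    _ = M a' b := hv b hb a ha a' ha'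
    _ = M a' b' := h a' (mem_big ha' hi) b (mem_big hb hj) b' (mem_big hb' hj')

lemma zero_transC (h : Horizontal M (bigSet D SA) (bigSet D SB)) (hi : i ∈ SA)
    (hj : j ∈ SB) (hj' : j' ∈ SB) (hz : ConstantZero M (D.rowBlock i) (D.rowBlock j)) :
    ConstantZero M (D.rowBlock i) (D.rowBlock j') := by
  obtain ⟨b, hb0⟩ := D.row_surj j
  have hb : b ∈ D.rowBlock j := hb0
  intro a ha b' hb'
  calc M a b' = M a b := (h a (mem_big ha hi) b (mem_big hb hj) b' (mem_big hb' hj')).symm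
    _ = false := hz a ha b hb

lemma horiz_transR (h : Vertical M (bigSet D SA) (bigSet D SB)) (hi : i ∈ SA) (hi' : i' ∈ SA)
    (hj : j ∈ SB) (hh : Horizontal M (D.rowBlock i) (D.rowBlock j)) :
    Horizontal M (D.rowBlock i') (D.rowBlock j) := by
  obtain ⟨a, ha0⟩ := D.row_surj i
  have ha : a ∈ D.rowBlock i := ha0
  intro a' ha' b hb b' hb'
  calc M a' b = M a b := (h b (mem_big hb hj) a (mem_big ha hi) a' (mem_big ha' hi')).symm
    _ = M a b' := hh a ha b hb b' hb'
    _ = M a' b' := h b' (mem_big hb' hj) a (mem_big ha hi) a' (mem_big ha' hi')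

lemma zero_transR (h : Vertical M (bigSet D SA) (bigSet D SB)) (hi : i ∈ SA) (hi' : i' ∈ SA)
    (hj : j ∈ SB) (hz : ConstantZero M (D.rowBlock i) (D.rowBlock j)) :
    ConstantZero M (D.rowBlock i') (D.rowBlock j) := by
  obtain ⟨a, ha0⟩ := D.row_surj i
  have ha : a ∈ D.rowBlock i := ha0
  intro a' ha' b hb
  calc M a' b = M a b := (h b (mem_big hb hj) a (mem_big ha hi) a' (mem_big ha' hi')).symm
    _ = false := hz a ha b hb

lemma diagH (hM : Graphic M) (h : Horizontal M (bigSet D SA) (bigSet D SB))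
    (hiA : i ∈ SA) (hiB : i ∈ SB) (hj : j ∈ SB) :
    ConstantZero M (D.rowBlock i) (D.rowBlock j) := by
  intro a ha b hb
  have heq : M a b = M a a := h a (mem_big ha hiA) b (mem_big hb hj) a (mem_big ha hiB)
  rw [heq, hM.2 a]

lemma diagV (hM : Graphic M) (h : Vertical M (bigSet D SA) (bigSet D SB))
    (hjA : j ∈ SA) (hjB : j ∈ SB) (hi : i ∈ SA) :
    ConstantZero M (D.rowBlock i) (D.rowBlock j) := by
  intro a ha b hb
  have heq : M a b = M b b := h b (mem_big hb hjB) a (mem_big ha hi) b (mem_big hb hjA)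
  rw [heq, hM.2 b]

/-- Transfers of the two possible zone predicates along a horizontal big zone. -/
lemma transH (h : Horizontal M (bigSet D SA) (bigSet D SB)) (hi : i ∈ SA)
    (hj : j ∈ SB) (hj' : j' ∈ SB) :
    ((Horizontal M (D.rowBlock i) (D.rowBlock j) ∧
        ¬ ConstantZero M (D.rowBlock i) (D.rowBlock j)) ↔
      (Horizontal M (D.rowBlock i) (D.rowBlock j') ∧
        ¬ ConstantZero M (D.rowBlock i) (D.rowBlock j'))) ∧
    ((Vertical M (D.rowBlock i) (D.rowBlock j) ∧
        ¬ ConstantZero M (D.rowBlock i) (D.rowBlock j)) ↔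
      (Vertical M (D.rowBlock i) (D.rowBlock j') ∧
        ¬ ConstantZero M (D.rowBlock i) (D.rowBlock j'))) := by
  constructor
  · constructor
    · rintro ⟨_, hz⟩
      exact ⟨horiz_sub h hi hj', fun hz' => hz (zero_transC h hi hj' hj hz')⟩
    · rintro ⟨_, hz⟩
      exact ⟨horiz_sub h hi hj, fun hz' => hz (zero_transC h hi hj hj' hz')⟩
  · constructor
    · rintro ⟨hv, hz⟩
      exact ⟨vert_trans h hi hj hj' hv, fun hz' => hz (zero_transC h hi hj' hj hz')⟩
    · rintro ⟨hv, hz⟩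
      exact ⟨vert_trans h hi hj' hj hv, fun hz' => hz (zero_transC h hi hj hj' hz')⟩

/-- Transfers of the two possible zone predicates along a vertical big zone. -/
lemma transV (h : Vertical M (bigSet D SA) (bigSet D SB)) (hj : j ∈ SB)
    (hi : i ∈ SA) (hi' : i' ∈ SA) :
    ((Horizontal M (D.rowBlock i) (D.rowBlock j) ∧
        ¬ ConstantZero M (D.rowBlock i) (D.rowBlock j)) ↔
      (Horizontal M (D.rowBlock i') (D.rowBlock j) ∧
        ¬ ConstantZero M (D.rowBlock i') (D.rowBlock j))) ∧
    ((Vertical M (D.rowBlock i) (D.rowBlock j) ∧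
        ¬ ConstantZero M (D.rowBlock i) (D.rowBlock j)) ↔
      (Vertical M (D.rowBlock i') (D.rowBlock j) ∧
        ¬ ConstantZero M (D.rowBlock i') (D.rowBlock j))) := by
  constructor
  · constructor
    · rintro ⟨hh, hz⟩
      exact ⟨horiz_transR h hi hi' hj hh, fun hz' => hz (zero_transR h hi' hi hj hz')⟩
    · rintro ⟨hh, hz⟩
      exact ⟨horiz_transR h hi' hi hj hh, fun hz' => hz (zero_transR h hi hi' hj hz')⟩
  · constructor
    · rintro ⟨_, hz⟩
      exact ⟨vert_sub h hi' hj, fun hz' => hz (zero_transR h hi' hi hj hz')⟩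
    · rintro ⟨_, hz⟩
      exact ⟨vert_sub h hi hj, fun hz' => hz (zero_transR h hi hi' hj hz')⟩

/-- Master lemma: any `s × s` matrix whose entries are described, off the diagonal and
according to the order of the indices, by two zone predicates `A₁`, `A₂` of `M` along `D`
with suitable transfer properties, is `d`-almost mixed-free whenever `M` is. -/
lemma master_amfree (M : BMatrix n n) (hM : Graphic M) (hfree : AlmostMixedFree d M)
    (D : Division n n s) (K : BMatrix s s)
    (A₁ A₂ : Fin s → Fin s → Prop)
    (hK : ∀ i j, K i j = true ↔ i ≠ j ∧ ((i < j ∧ A₁ i j) ∨ (j < i ∧ A₂ i j)))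
    (hZ₁ : ∀ i j, ConstantZero M (D.rowBlock i) (D.rowBlock j) → ¬ A₁ i j)
    (hZ₂ : ∀ i j, ConstantZero M (D.rowBlock i) (D.rowBlock j) → ¬ A₂ i j)
    (htH : ∀ (SA SB : Set (Fin s)), Horizontal M (bigSet D SA) (bigSet D SB) →
      ∀ i ∈ SA, ∀ j ∈ SB, ∀ j' ∈ SB, (A₁ i j ↔ A₁ i j') ∧ (A₂ i j ↔ A₂ i j'))
    (htV : ∀ (SA SB : Set (Fin s)), Vertical M (bigSet D SA) (bigSet D SB) →
      ∀ j ∈ SB, ∀ i ∈ SA, ∀ i' ∈ SA, (A₁ i j ↔ A₁ i' j) ∧ (A₂ i j ↔ A₂ i' j)) :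
    AlmostMixedFree d K := by
  rintro ⟨E, hE⟩
  refine hfree ⟨⟨E.row ∘ D.row, E.col ∘ D.row,
    E.row_mono.comp D.row_mono, E.col_mono.comp D.row_mono,
    E.row_surj.comp D.row_surj, E.col_surj.comp D.row_surj⟩, fun I J hIJ => ?_⟩
  obtain ⟨hEH, hEV⟩ := hE I J hIJ
  constructor
  · -- the big zone is not horizontal
    intro hbig
    have hbig' : Horizontal M (bigSet D (E.rowBlock I)) (bigSet D (E.colBlock J)) := hbig
    apply hEH
    intro i hi j hj j' hj'
    apply bool_ext
    by_cases hiB : i ∈ E.colBlock J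
    · have hfalse : ∀ jx, jx ∈ E.colBlock J → K i jx ≠ true := by
        intro jx hjx hKt
        obtain ⟨hne, hor⟩ := (hK i jx).mp hKt
        have hz := diagH hM hbig' hi hiB hjx
        rcases hor with ⟨_, h1⟩ | ⟨_, h2⟩
        · exact hZ₁ i jx hz h1
        · exact hZ₂ i jx hz h2
      constructor
      · intro h; exact absurd h (hfalse j hj)
      · intro h; exact absurd h (hfalse j' hj')
    · have hjne : j ≠ i := fun h => hiB (h ▸ hj)
      have hj'ne : j' ≠ i := fun h => hiB (h ▸ hj')
      have hcross : ∀ {x y : Fin s}, x ∈ E.colBlock J → y ∈ E.colBlock J →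
          x < i → i < y → False := by
        intro x y hx hy hxi hiy
        apply hiB
        have h1 : E.col x ≤ E.col i := E.col_mono hxi.le
        have h2 : E.col i ≤ E.col y := E.col_mono hiy.le
        have hx' : E.col x = J := hx
        have hy' : E.col y = J := hy
        show E.col i = J
        rw [hx'] at h1; rw [hy'] at h2
        exact le_antisymm h2 h1
      have hiff := htH _ _ hbig' i hi j hj j' hj'
      rcases lt_trichotomy i j with h1 | h1 | h1
      · rcases lt_trichotomy i j' with h2 | h2 | h2
        · rw [hK, hK]
          constructor
          · rintro ⟨_, ⟨_, hA⟩ | ⟨hlt, _⟩⟩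
            · exact ⟨h2.ne, Or.inl ⟨h2, hiff.1.mp hA⟩⟩
            · exact absurd h1 (lt_asymm hlt)
          · rintro ⟨_, ⟨_, hA⟩ | ⟨hlt, _⟩⟩
            · exact ⟨h1.ne, Or.inl ⟨h1, hiff.1.mpr hA⟩⟩
            · exact absurd h2 (lt_asymm hlt)
        · exact absurd h2.symm hj'ne
        · exact absurd (hcross hj' hj h2 h1) id
      · exact absurd h1.symm hjne
      · rcases lt_trichotomy i j' with h2 | h2 | h2
        · exact absurd (hcross hj hj' h1 h2) id
        · exact absurd h2.symm hj'ne
        · rw [hK, hK]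
          constructor
          · rintro ⟨_, ⟨hlt, _⟩ | ⟨_, hA⟩⟩
            · exact absurd hlt (lt_asymm h1)
            · exact ⟨h2.ne', Or.inr ⟨h2, hiff.2.mp hA⟩⟩
          · rintro ⟨_, ⟨hlt, _⟩ | ⟨_, hA⟩⟩
            · exact absurd hlt (lt_asymm h2)
            · exact ⟨h1.ne', Or.inr ⟨h1, hiff.2.mpr hA⟩⟩
  · -- the big zone is not vertical
    intro hbig
    have hbig' : Vertical M (bigSet D (E.rowBlock I)) (bigSet D (E.colBlock J)) := hbig
    apply hEV
    intro j hj i hi i' hi'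
    apply bool_ext
    by_cases hjA : j ∈ E.rowBlock I
    · have hfalse : ∀ ix, ix ∈ E.rowBlock I → K ix j ≠ true := by
        intro ix hix hKt
        obtain ⟨hne, hor⟩ := (hK ix j).mp hKt
        have hz := diagV hM hbig' hjA hj hix
        rcases hor with ⟨_, h1⟩ | ⟨_, h2⟩
        · exact hZ₁ ix j hz h1
        · exact hZ₂ ix j hz h2
      constructor
      · intro h; exact absurd h (hfalse i hi)
      · intro h; exact absurd h (hfalse i' hi')
    · have hine : i ≠ j := fun h => hjA (h ▸ hi)
      have hi'ne : i' ≠ j := fun h => hjA (h ▸ hi')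
      have hcross : ∀ {x y : Fin s}, x ∈ E.rowBlock I → y ∈ E.rowBlock I →
          x < j → j < y → False := by
        intro x y hx hy hxj hjy
        apply hjA
        have h1 : E.row x ≤ E.row j := E.row_mono hxj.le
        have h2 : E.row j ≤ E.row y := E.row_mono hjy.le
        have hx' : E.row x = I := hx
        have hy' : E.row y = I := hy
        show E.row j = I
        rw [hx'] at h1; rw [hy'] at h2
        exact le_antisymm h2 h1
      have hiff := htV _ _ hbig' j hj i hi i' hi'
      rcases lt_trichotomy i j with h1 | h1 | h1
      · rcases lt_trichotomy i' j with h2 | h2 | h2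
        · rw [hK, hK]
          constructor
          · rintro ⟨_, ⟨_, hA⟩ | ⟨hlt, _⟩⟩
            · exact ⟨h2.ne, Or.inl ⟨h2, hiff.1.mp hA⟩⟩
            · exact absurd h1 (lt_asymm hlt)
          · rintro ⟨_, ⟨_, hA⟩ | ⟨hlt, _⟩⟩
            · exact ⟨h1.ne, Or.inl ⟨h1, hiff.1.mpr hA⟩⟩
            · exact absurd h2 (lt_asymm hlt)
        · exact absurd h2 hi'ne
        · exact absurd (hcross hi hi' h1 h2) id
      · exact absurd h1 hine
      · rcases lt_trichotomy i' j with h2 | h2 | h2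
        · exact absurd (hcross hi' hi h2 h1) id
        · exact absurd h2 hi'ne
        · rw [hK, hK]
          constructor
          · rintro ⟨_, ⟨hlt, _⟩ | ⟨_, hA⟩⟩
            · exact absurd hlt (lt_asymm h1)
            · exact ⟨h2.ne', Or.inr ⟨h2, hiff.2.mp hA⟩⟩
          · rintro ⟨_, ⟨hlt, _⟩ | ⟨_, hA⟩⟩
            · exact absurd hlt (lt_asymm h2)
            · exact ⟨h1.ne', Or.inr ⟨h1, hiff.2.mpr hA⟩⟩

end Aux

/-- Let `d ≥ 2`, let `M` be a graphic matrix that is `d`-almost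
mixed-free, and let `D` be a symmetric division of `M`. Then the adjacency matrices of
the horizontal and vertical compressions of `M` along `D` are both `d`-almost
mixed-free. -/
theorem compressions_amfree {n s : ℕ} (d : ℕ) (hd : 2 ≤ d)
    (M : BMatrix n n) (hM : Graphic M) (hfree : AlmostMixedFree d M)
    (D : Division n n s) (hD : D.Symm) :
    AlmostMixedFree d (graphMatrix (horizCompression M D)) ∧
    AlmostMixedFree d (graphMatrix (vertCompression M D)) := by
  constructor
  · exact master_amfree M hM hfree D (graphMatrix (horizCompression M D))
      (fun i j => Horizontal M (D.rowBlock i) (D.rowBlock j) ∧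
        ¬ ConstantZero M (D.rowBlock i) (D.rowBlock j))
      (fun i j => Vertical M (D.rowBlock i) (D.rowBlock j) ∧
        ¬ ConstantZero M (D.rowBlock i) (D.rowBlock j))
      (fun i j => horiz_entry hM hD i j)
      (fun i j hz h => h.2 hz)
      (fun i j hz h => h.2 hz)
      (fun SA SB h i hi j hj j' hj' => transH h hi hj hj')
      (fun SA SB h j hj i hi i' hi' => transV h hj hi hi')
  · exact master_amfree M hM hfree D (graphMatrix (vertCompression M D))
      (fun i j => Vertical M (D.rowBlock i) (D.rowBlock j) ∧
        ¬ ConstantZero M (D.rowBlock i) (D.rowBlock j))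
      (fun i j => Horizontal M (D.rowBlock i) (D.rowBlock j) ∧
        ¬ ConstantZero M (D.rowBlock i) (D.rowBlock j))
      (fun i j => vert_entry hM hD i j)
      (fun i j hz h => h.2 hz)
      (fun i j hz h => h.2 hz)
      (fun SA SB h i hi j hj j' hj' => ⟨(transH h hi hj hj').2, (transH h hi hj hj').1⟩)
      (fun SA SB h j hj i hi i' hi' => ⟨(transV h hj hi hi').2, (transV h hj hi hi').1⟩)

end TwPaper
end

section
/- For every integer d ≥ 1 there exists a constant C_d ∈ ℕ such that the following holds: for every graphic matrix M that is d-mixed-free and every symmetric division D of M, the chromatic number of the mixed compression G^M_D satisfies χ(G^M_D) ≤ C_d. -/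
namespace TwPaper


/-!
A `k`-grid of a 0/1 matrix is a `k`-division all of whose zones contain a `1`. A `d`-grid of the
`s × s` matrix recording which zones of `D` are mixed pulls back to a `d`-mixed minor of `M`, so
that matrix and all its principal submatrices are grid-free. By the Marcus–Tardos theorem an
`s × s` matrix without a `k`-grid has at most `c_k · s` ones: contract `k² × k²` blocks; few
blocks have `k` nonzero rows or `k` nonzero columns (otherwise `k` of them share `k` columns and
form a grid), and every other block has at most `(k - 1)²` ones. Hence every set `S` of vertices
of `G^M_D` spans at most `c_d |S|` ordered edges, some vertex of `S` has at most `c_d` neighbours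
in `S`, and greedy colouring uses at most `c_d + 1` colours.
-/

open Finset Function Matrix

section SegmentIndex

variable {α : Type*} [LinearOrder α] {k : ℕ}

/-- For strictly increasing `u`, the `i` with `a ∈ [u i, u (i + 1))`; points below `u 0` go
to `0`. -/
def segmentIndex (hk : 0 < k) (u : Fin k → α) (a : α) : Fin k :=
  ⟨#{i | u i ≤ a} - 1, by
    have := (card_filter_le univ fun i => u i ≤ a).trans_eq (card_fin k)
    omega⟩

lemma segmentIndex_mono (hk : 0 < k) (u : Fin k → α) : Monotone (segmentIndex hk u) := by
  intro a b hab
  have : #{i | u i ≤ a} ≤ #{i | u i ≤ b} :=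
    card_le_card fun i => by simpa using fun h => le_trans h hab
  simp only [segmentIndex, Fin.mk_le_mk]
  omega

lemma segmentIndex_apply (hk : 0 < k) {u : Fin k → α} (hu : StrictMono u) (i : Fin k) :
    segmentIndex hk u (u i) = i := by
  have : ({j | u j ≤ u i} : Finset (Fin k)) = Iic i := by ext; simp [hu.le_iff_le]
  ext
  simp [segmentIndex, this]

lemma segmentIndex_surjective (hk : 0 < k) {u : Fin k → α} (hu : StrictMono u) :
    Surjective (segmentIndex hk u) :=
  fun i => ⟨u i, segmentIndex_apply hk hu i⟩

end SegmentIndex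

def Division.comap {m n m' n' k : ℕ} (E : Division m' n' k) {f : Fin m → Fin m'}
    {g : Fin n → Fin n'} (hf : Monotone f) (hg : Monotone g) (hf' : Surjective f)
    (hg' : Surjective g) : Division m n k where
  row := E.row ∘ f
  col := E.col ∘ g
  row_mono := E.row_mono.comp hf
  col_mono := E.col_mono.comp hg
  row_surj := E.row_surj.comp hf'
  col_surj := E.col_surj.comp hg'

section Grid

variable {m n m' n' k : ℕ}

def numOnes (Z : BMatrix m n) : ℕ := #{p : Fin m × Fin n | Z p.1 p.2}

lemma numOnes_le (Z : BMatrix m n) : numOnes Z ≤ m * n := by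
  simpa [numOnes] using card_filter_le univ fun p : Fin m × Fin n => Z p.1 p.2

lemma numOnes_eq_sum (Z : BMatrix m n) : numOnes Z = ∑ i, #{j | Z i j} := by
  simp only [numOnes, card_filter, Fintype.sum_prod_type]

def HasGrid (k : ℕ) (Z : BMatrix m n) : Prop :=
  ∃ E : Division m n k, ∀ i j, ∃ a b, E.row a = i ∧ E.col b = j ∧ Z a b

lemma HasGrid.of_lift {Z : BMatrix m n} {Z' : BMatrix m' n'} {f : Fin m → Fin m'}
    {g : Fin n → Fin n'} (hf : Monotone f) (hg : Monotone g) (hf' : Surjective f)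
    (hg' : Surjective g) (hlift : ∀ a' b', Z' a' b' → ∃ a b, f a = a' ∧ g b = b' ∧ Z a b)
    (h : HasGrid k Z') : HasGrid k Z := by
  obtain ⟨E, hE⟩ := h
  refine ⟨E.comap hf hg hf' hg', fun i j => ?_⟩
  obtain ⟨a', b', rfl, rfl, hZ'⟩ := hE i j
  obtain ⟨a, b, rfl, rfl, hZ⟩ := hlift a' b' hZ'
  exact ⟨a, b, rfl, rfl, hZ⟩

lemma HasGrid.of_transpose {Z : BMatrix m n} (h : HasGrid k Zᵀ) : HasGrid k Z := by
  obtain ⟨E, hE⟩ := h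
  refine ⟨⟨E.col, E.row, E.col_mono, E.row_mono, E.col_surj, E.row_surj⟩, fun i j => ?_⟩
  obtain ⟨b, a, hb, ha, hZ⟩ := hE j i
  exact ⟨a, b, ha, hb, hZ⟩

lemma HasGrid.of_submatrix (hk : 0 < k) {Z : BMatrix m n} {u : Fin m' → Fin m}
    {v : Fin n' → Fin n} (hu : StrictMono u) (hv : StrictMono v)
    (h : HasGrid k (Z.submatrix u v)) : HasGrid k Z := by
  obtain ⟨E, hE⟩ := h
  have hm' : 0 < m' := (E.row_surj ⟨0, hk⟩).choose.pos
  have hn' : 0 < n' := (E.col_surj ⟨0, hk⟩).choose.pos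
  refine HasGrid.of_lift (segmentIndex_mono hm' u) (segmentIndex_mono hn' v)
    (segmentIndex_surjective hm' hu) (segmentIndex_surjective hn' hv) ?_ ⟨E, hE⟩
  exact fun a b hZ => ⟨u a, v b, segmentIndex_apply hm' hu a, segmentIndex_apply hn' hv b, hZ⟩

lemma HasGrid.of_ones_rectangle (hk : 0 < k) {Z : BMatrix m n} {U : Finset (Fin m)}
    {S : Finset (Fin n)} (hU : #U = k) (hS : #S = k) (h : ∀ a ∈ U, ∀ b ∈ S, Z a b) :
    HasGrid k Z := by
  refine .of_submatrix hk (U.orderEmbOfFin hU).strictMono (S.orderEmbOfFin hS).strictMono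
    ⟨⟨id, id, monotone_id, monotone_id, surjective_id, surjective_id⟩, fun i j => ?_⟩
  exact ⟨i, j, rfl, rfl, h _ (U.orderEmbOfFin_mem hU i) _ (S.orderEmbOfFin_mem hS j)⟩

open Classical in
noncomputable def contract (Z : BMatrix m n) (q : Fin m → Fin m') (r : Fin n → Fin n') :
    BMatrix m' n' :=
  fun a' b' => decide (∃ a b, q a = a' ∧ r b = b' ∧ Z a b)

lemma HasGrid.of_contract {Z : BMatrix m n} {q : Fin m → Fin m'} {r : Fin n → Fin n'}
    (hq : Monotone q) (hr : Monotone r) (hq' : Surjective q) (hr' : Surjective r)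
    (h : HasGrid k (contract Z q r)) : HasGrid k Z :=
  h.of_lift hq hr hq' hr' fun _ _ hZ => by simpa [contract] using hZ

end Grid

section MarcusTardos

variable {s t k K : ℕ}

lemma exists_blockMap (s : ℕ) (hK : 0 < K) :
    ∃ t, K * t < s + K ∧ ∃ q : Fin s → Fin t, Monotone q ∧ Surjective q ∧
      ∀ v, #{a | q a = v} ≤ K := by
  refine ⟨(s + K - 1) / K, ?_, fun a => ⟨a / K, ?_⟩, ?_, ?_, ?_⟩
  · have := Nat.mul_div_le (s + K - 1) K
    omega
  · rw [Nat.lt_iff_add_one_le, Nat.le_div_iff_mul_le hK, add_mul, one_mul]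
    have := Nat.div_mul_le_self a K
    omega
  · exact fun a b hab => Fin.mk_le_mk.mpr (Nat.div_le_div_right hab)
  · intro v
    have := (Nat.le_div_iff_mul_le hK).mp (Nat.lt_iff_add_one_le.mp v.isLt)
    rw [add_mul, one_mul] at this
    exact ⟨⟨v * K, by omega⟩, Fin.ext (Nat.mul_div_cancel _ hK)⟩
  · intro v
    refine (card_le_card_of_injOn (t := (univ : Finset (Fin K)))
      (fun a : Fin s => ⟨a % K, Nat.mod_lt _ hK⟩) (by simp) ?_).trans_eq (card_fin K)
    intro a ha b hb hab
    simp only [coe_filter, mem_univ, true_and, Set.mem_ofPred_eq] at ha hb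
    have hdiv : (a : ℕ) / K = b / K := congrArg Fin.val (ha.trans hb.symm)
    have hmod : (a : ℕ) % K = b % K := Fin.val_eq_of_eq hab
    exact Fin.ext (by rw [← Nat.div_add_mod a K, ← Nat.div_add_mod b K, hdiv, hmod])

section Blocks

variable (Z : BMatrix s s) (q : Fin s → Fin t)

def blockOnes (u v : Fin t) : Finset (Fin s × Fin s) :=
  {p | q p.1 = u ∧ q p.2 = v ∧ Z p.1 p.2}

def blockRows (u v : Fin t) : Finset (Fin s) := (blockOnes Z q u v).image Prod.fst

def blockCols (u v : Fin t) : Finset (Fin s) := (blockOnes Z q u v).image Prod.snd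

lemma blockRows_eq_blockCols_transpose (u v : Fin t) :
    blockRows Z q u v = blockCols Zᵀ q v u := by
  ext a
  simp only [blockRows, blockCols, blockOnes, mem_image]
  simp_rw [mem_filter]
  simp only [mem_univ, true_and, Prod.exists, exists_and_right, exists_eq_right, transpose_apply]
  tauto

lemma blockCols_subset (u v : Fin t) : blockCols Z q u v ⊆ ({b | q b = v} : Finset (Fin s)) := by
  intro b hb
  obtain ⟨p, hp, rfl⟩ := mem_image.1 hb
  simp only [blockOnes, mem_filter] at hp
  simpa using hp.2.2.1

lemma blockRows_subset (u v : Fin t) : blockRows Z q u v ⊆ ({a | q a = u} : Finset (Fin s)) := by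
  rw [blockRows_eq_blockCols_transpose]
  exact blockCols_subset _ q v u

lemma card_blockOnes_le_mul (u v : Fin t) :
    #(blockOnes Z q u v) ≤ #(blockRows Z q u v) * #(blockCols Z q u v) := by
  rw [← card_product]
  exact card_le_card fun p hp => mem_product.2 ⟨mem_image_of_mem _ hp, mem_image_of_mem _ hp⟩

lemma contract_eq_true_iff (u v : Fin t) :
    contract Z q q u v = true ↔ (blockOnes Z q u v).Nonempty := by
  simp [contract, blockOnes, Finset.Nonempty]

lemma numOnes_eq_sum_blockOnes :
    numOnes Z = ∑ p : Fin t × Fin t, #(blockOnes Z q p.1 p.2) := by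
  rw [numOnes, card_eq_sum_card_fiberwise (f := fun p => (q p.1, q p.2)) (t := univ)
    fun _ _ => mem_univ _]
  refine sum_congr rfl fun p _ => congrArg card ?_
  ext x
  simp only [blockOnes, mem_filter, mem_univ, true_and, Prod.ext_iff]
  tauto

lemma card_blockOnes_le (hfib : ∀ v, #{a | q a = v} ≤ K) (u v : Fin t) :
    #(blockOnes Z q u v) ≤ (k - 1) ^ 2 * (if contract Z q q u v then 1 else 0) +
      K ^ 2 * ((if k ≤ #(blockRows Z q u v) then 1 else 0) +
        (if k ≤ #(blockCols Z q u v) then 1 else 0)) := by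
  have hmul := card_blockOnes_le_mul Z q u v
  by_cases hbig : k ≤ #(blockRows Z q u v) ∨ k ≤ #(blockCols Z q u v)
  · have hrows := (card_le_card (blockRows_subset Z q u v)).trans (hfib u)
    have hcols := (card_le_card (blockCols_subset Z q u v)).trans (hfib v)
    have hone : 1 ≤ (if k ≤ #(blockRows Z q u v) then 1 else 0) +
        (if k ≤ #(blockCols Z q u v) then 1 else 0) := by
      split_ifs <;> omega
    calc #(blockOnes Z q u v) ≤ K ^ 2 * 1 := by nlinarith [Nat.mul_le_mul hrows hcols]
      _ ≤ _ := (Nat.mul_le_mul_left _ hone).trans (Nat.le_add_left _ _)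
  · push Not at hbig
    obtain hne | hempty := (blockOnes Z q u v).eq_empty_or_nonempty
    · simp [hne]
    · rw [if_pos ((contract_eq_true_iff Z q u v).2 hempty), if_neg (not_le.2 hbig.1),
        if_neg (not_le.2 hbig.2), sq]
      nlinarith [Nat.mul_le_mul (Nat.le_sub_one_of_lt hbig.1) (Nat.le_sub_one_of_lt hbig.2)]

end Blocks

variable {Z : BMatrix s s} {q : Fin s → Fin t}

/-- `k` row blocks sharing `k` nonzero columns would give a `k × k` rectangle of ones in the
row-contraction of `Z`, hence a `k`-grid. -/
lemma card_filter_subset_blockCols_lt (hk : 0 < k) (hZ : ¬ HasGrid k Z) (hq : Monotone q)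
    (hq' : Surjective q) {S : Finset (Fin s)} (hS : #S = k) (v : Fin t) :
    #{u | S ⊆ blockCols Z q u v} < k := by
  by_contra! h
  obtain ⟨U, hU, hUk⟩ := exists_subset_card_eq h
  refine hZ (.of_contract hq monotone_id hq' surjective_id (.of_ones_rectangle hk hUk hS ?_))
  intro u hu b hb
  obtain ⟨p, hp, hpb⟩ := mem_image.1 ((mem_filter.1 (hU hu)).2 hb)
  simp only [blockOnes, mem_filter, mem_univ, true_and] at hp
  simpa [contract] using ⟨p.1, hp.1, hpb ▸ hp.2.2⟩

lemma card_wideBlocks_le (hk : 0 < k) (hZ : ¬ HasGrid k Z) (hq : Monotone q)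
    (hq' : Surjective q) (hfib : ∀ v, #{a | q a = v} ≤ K) (v : Fin t) :
    #{u | k ≤ #(blockCols Z q u v)} ≤ (k - 1) * K.choose k := by
  set P := powersetCard k ({b | q b = v} : Finset (Fin s))
  have hcover : ({u | k ≤ #(blockCols Z q u v)} : Finset (Fin t)) ⊆
      P.biUnion fun S => {u | S ⊆ blockCols Z q u v} := by
    intro u hu
    obtain ⟨S, hS, hSk⟩ := exists_subset_card_eq (mem_filter.1 hu).2
    exact mem_biUnion.2 ⟨S, mem_powersetCard.2 ⟨hS.trans (blockCols_subset Z q u v), hSk⟩,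
      mem_filter.2 ⟨mem_univ _, hS⟩⟩
  calc #{u | k ≤ #(blockCols Z q u v)}
      ≤ ∑ S ∈ P, #{u | S ⊆ blockCols Z q u v} := (card_le_card hcover).trans card_biUnion_le
    _ ≤ ∑ S ∈ P, (k - 1) := sum_le_sum fun S hS => Nat.le_sub_one_of_lt
        (card_filter_subset_blockCols_lt hk hZ hq hq' (mem_powersetCard.1 hS).2 v)
    _ ≤ (k - 1) * K.choose k := by
        rw [sum_const, smul_eq_mul, card_powersetCard, mul_comm]
        exact Nat.mul_le_mul_left _ (Nat.choose_le_choose k (hfib v))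

def marcusTardosConst (k : ℕ) : ℕ := 2 * k ^ 4 * (k ^ 2).choose k

lemma numOnes_le_contract (hk : 0 < k) (hZ : ¬ HasGrid k Z) (hq : Monotone q)
    (hq' : Surjective q) (hfib : ∀ v, #{a | q a = v} ≤ k ^ 2) :
    numOnes Z ≤ (k - 1) ^ 2 * numOnes (contract Z q q) + (k - 1) * marcusTardosConst k * t := by
  have hwide : #{p : Fin t × Fin t | k ≤ #(blockCols Z q p.1 p.2)} ≤
      t * ((k - 1) * (k ^ 2).choose k) := by
    rw [card_filter, Fintype.sum_prod_type_right]
    simp_rw [← card_filter]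
    exact (sum_le_sum fun v _ => card_wideBlocks_le hk hZ hq hq' hfib v).trans (by simp)
  have htall : #{p : Fin t × Fin t | k ≤ #(blockRows Z q p.1 p.2)} ≤
      t * ((k - 1) * (k ^ 2).choose k) := by
    simp_rw [blockRows_eq_blockCols_transpose]
    rw [card_filter, Fintype.sum_prod_type]
    simp_rw [← card_filter]
    exact (sum_le_sum fun u _ => card_wideBlocks_le hk (fun h => hZ h.of_transpose) hq hq' hfib
      u).trans (by simp)
  calc numOnes Z = ∑ p : Fin t × Fin t, #(blockOnes Z q p.1 p.2) := numOnes_eq_sum_blockOnes Z q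
    _ ≤ ∑ p : Fin t × Fin t, ((k - 1) ^ 2 * (if contract Z q q p.1 p.2 then 1 else 0) +
        (k ^ 2) ^ 2 * ((if k ≤ #(blockRows Z q p.1 p.2) then 1 else 0) +
          (if k ≤ #(blockCols Z q p.1 p.2) then 1 else 0))) :=
        sum_le_sum fun p _ => card_blockOnes_le Z q hfib p.1 p.2
    _ = (k - 1) ^ 2 * numOnes (contract Z q q) + k ^ 4 *
        (#{p : Fin t × Fin t | k ≤ #(blockRows Z q p.1 p.2)} +
          #{p : Fin t × Fin t | k ≤ #(blockCols Z q p.1 p.2)}) := by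
        simp only [sum_add_distrib, ← mul_sum, numOnes, card_filter, ← pow_mul]
    _ ≤ (k - 1) ^ 2 * numOnes (contract Z q q) + (k - 1) * marcusTardosConst k * t := by
        unfold marcusTardosConst
        nlinarith [Nat.mul_le_mul_left (k ^ 4) (Nat.add_le_add htall hwide)]

lemma numOnes_eq_zero_of_not_hasGrid_one {m n : ℕ} {Z : BMatrix m n} (hZ : ¬ HasGrid 1 Z) :
    numOnes Z = 0 :=
  card_eq_zero.2 <| filter_eq_empty_iff.2 fun p _ hp =>
    hZ (.of_ones_rectangle one_pos (card_singleton p.1) (card_singleton p.2) (by simpa using hp))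

lemma mul_le_of_mul_lt_add {k s t : ℕ} (hs : k ^ 3 < s) (ht : k ^ 2 * t < s + k ^ 2) :
    (k - 1) * k * t ≤ s := by
  obtain rfl | ⟨j, rfl⟩ : k = 0 ∨ ∃ j, k = j + 1 := by cases k <;> simp
  · simp
  rw [Nat.add_sub_cancel]
  have hj : j * (j + 1) ^ 2 ≤ (j + 1) ^ 3 := by rw [pow_succ' _ 2]; gcongr; omega
  have : (j + 1) * (j * (j + 1) * t) ≤ (j + 1) * s := by
    nlinarith [Nat.mul_le_mul_left j ht.le]
  exact Nat.le_of_mul_le_mul_left this j.succ_pos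

/-- **Marcus–Tardos theorem**, grid version. -/
theorem numOnes_le_of_not_hasGrid (hk : 0 < k) (Z : BMatrix s s) (hZ : ¬ HasGrid k Z) :
    numOnes Z ≤ marcusTardosConst k * s := by
  obtain rfl | hk2 : k = 1 ∨ 2 ≤ k := by omega
  · simp [numOnes_eq_zero_of_not_hasGrid_one hZ]
  induction s using Nat.strong_induction_on with
  | _ s ih =>
  by_cases hs : s ≤ k ^ 3
  · calc numOnes Z ≤ s * s := numOnes_le Z
      _ ≤ k ^ 3 * s := Nat.mul_le_mul_right s hs
      _ ≤ marcusTardosConst k * s := Nat.mul_le_mul_right s (by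
          have hB : 0 < (k ^ 2).choose k := Nat.choose_pos (Nat.le_self_pow two_ne_zero k)
          unfold marcusTardosConst
          calc k ^ 3 ≤ k ^ 4 := Nat.pow_le_pow_right hk (by norm_num)
            _ ≤ 2 * k ^ 4 * (k ^ 2).choose k := by nlinarith [Nat.mul_le_mul_left (2 * k ^ 4) hB])
  obtain ⟨t, hKt, q, hq, hq', hfib⟩ := exists_blockMap s (K := k ^ 2) (by positivity)
  have hts : t < s := by
    by_contra! hst
    have h4 : 4 ≤ k ^ 2 := by nlinarith
    nlinarith [Nat.mul_le_mul_left (k ^ 2) hst]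
  have hrec := numOnes_le_contract hk hZ hq hq' hfib
  have hcontract := ih t hts (contract Z q q) fun h => hZ (h.of_contract hq hq hq' hq')
  calc numOnes Z
      ≤ (k - 1) ^ 2 * (marcusTardosConst k * t) + (k - 1) * marcusTardosConst k * t :=
        hrec.trans (by gcongr)
    _ = marcusTardosConst k * ((k - 1) * k * t) := by
        obtain ⟨j, rfl⟩ : ∃ j, k = j + 1 := ⟨k - 1, by omega⟩
        simp only [Nat.add_sub_cancel]
        ring
    _ ≤ marcusTardosConst k * s := Nat.mul_le_mul_left _ (mul_le_of_mul_lt_add (by omega) hKt)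

lemma sum_card_filter_le_of_not_hasGrid (hk : 0 < k) {Z : BMatrix s s} (hZ : ¬ HasGrid k Z)
    (S : Finset (Fin s)) : ∑ v ∈ S, #{w ∈ S | Z v w} ≤ marcusTardosConst k * #S := by
  set u := S.orderEmbOfFin rfl
  have := numOnes_le_of_not_hasGrid hk (Z.submatrix u u)
    fun h => hZ (h.of_submatrix hk u.strictMono u.strictMono)
  rw [numOnes_eq_sum] at this
  conv_lhs => rw [← map_orderEmbOfFin_univ S rfl]
  rw [sum_map]
  simp only [filter_map, card_map]
  exact this

end MarcusTardos

theorem colorable_of_forall_exists_degree_le {V : Type*} [Fintype V] {G : SimpleGraph V}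
    [DecidableRel G.Adj] {c : ℕ}
    (h : ∀ S : Finset V, S.Nonempty → ∃ v ∈ S, #{w ∈ S | G.Adj v w} ≤ c) :
    G.Colorable (c + 1) := by
  classical
  suffices ∀ S : Finset V, ∃ f : V → Fin (c + 1),
      (S : Set V).Pairwise fun a b => G.Adj a b → f a ≠ f b by
    obtain ⟨f, hf⟩ := this univ
    exact ⟨.mk f fun hab => hf (mem_univ _) (mem_univ _) hab.ne hab⟩
  intro S
  induction S using Finset.strongInduction with
  | H S ih =>
  obtain rfl | hS := S.eq_empty_or_nonempty
  · exact ⟨0, by simp⟩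
  obtain ⟨v, hv, hdeg⟩ := h S hS
  obtain ⟨f, hf⟩ := ih _ (erase_ssubset hv)
  obtain ⟨x, -, hx⟩ := exists_mem_notMem_of_card_lt_card (s := image f {w ∈ S | G.Adj v w})
    (t := univ) (by simpa using card_image_le.trans_lt (Nat.lt_succ_of_le hdeg))
  have hfx : ∀ b ∈ S, G.Adj v b → f b ≠ x := fun b hb hvb hbx =>
    hx (mem_image.2 ⟨b, mem_filter.2 ⟨hb, hvb⟩, hbx⟩)
  refine ⟨update f v x, ?_⟩
  rw [← insert_erase hv, coe_insert, Set.pairwise_insert]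
  refine ⟨fun a ha b hb hab hadj => ?_, fun b hb hvb => ?_⟩
  · rw [update_of_ne (ne_of_mem_erase ha), update_of_ne (ne_of_mem_erase hb)]
    exact hf ha hb hab hadj
  · rw [update_self, update_of_ne hvb.symm]
    exact ⟨fun hadj => (hfx b (mem_of_mem_erase hb) hadj).symm,
      fun hadj => hfx b (mem_of_mem_erase hb) hadj.symm⟩

section MixedZones

variable {m n s d : ℕ}

lemma Mixed.mono {M : BMatrix m n} {R R' : Set (Fin m)} {C C' : Set (Fin n)}
    (h : Mixed M R C) (hR : R ⊆ R') (hC : C ⊆ C') : Mixed M R' C' :=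
  ⟨fun hH => h.1 fun i hi j hj j' hj' => hH i (hR hi) j (hC hj) j' (hC hj'),
    fun hV => h.2 fun j hj i hi i' hi' => hV j (hC hj) i (hR hi) i' (hR hi')⟩

lemma horizontal_iff_vertical {M : BMatrix n n} (hM : ∀ i j, M i j = M j i)
    {R C : Set (Fin n)} : Horizontal M R C ↔ Vertical M C R := by
  simp only [Horizontal, Vertical, hM _ (_ : Fin n)]

lemma Mixed.symm {M : BMatrix n n} (hM : ∀ i j, M i j = M j i) {R C : Set (Fin n)}
    (h : Mixed M R C) : Mixed M C R :=
  ⟨fun hH => h.2 ((horizontal_iff_vertical hM).1 hH),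
    fun hV => h.1 ((horizontal_iff_vertical hM).2 hV)⟩

lemma Division.ZoneMixed.symm {M : BMatrix n n} (hM : ∀ i j, M i j = M j i)
    {D : Division n n s} (hD : D.Symm) {i j : Fin s} (h : D.ZoneMixed M i j) :
    D.ZoneMixed M j i := by
  have hblock : D.rowBlock = D.colBlock := by
    unfold Division.rowBlock Division.colBlock
    rw [hD]
  unfold Division.ZoneMixed at h ⊢
  rw [hblock] at h ⊢
  exact h.symm hM

open Classical in
noncomputable def mixedZoneMatrix (M : BMatrix m n) (D : Division m n s) : BMatrix s s :=
  fun i j => decide (D.ZoneMixed M i j)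

lemma not_hasGrid_mixedZoneMatrix {M : BMatrix m n} (hM : MixedFree d M) (D : Division m n s) :
    ¬ HasGrid d (mixedZoneMatrix M D) := by
  rintro ⟨E, hE⟩
  refine hM ⟨E.comap D.row_mono D.col_mono D.row_surj D.col_surj, fun i j => ?_⟩
  obtain ⟨a, b, rfl, rfl, hab⟩ := hE i j
  simp only [mixedZoneMatrix, decide_eq_true_eq] at hab
  exact hab.mono (fun x hx => congrArg E.row hx)
    (fun x hx => congrArg E.col hx)

end MixedZones

/-- For every `d ≥ 1` there is a constant `C ∈ ℕ` such that: for every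
graphic matrix `M` that is `d`-mixed-free and every symmetric division `D` of `M`, the
chromatic number of the mixed compression satisfies `χ(G^M_D) ≤ C`. -/
theorem mixed_compression_chromatic (d : ℕ) (hd : 1 ≤ d) :
    ∃ C : ℕ, ∀ (n : ℕ) (M : BMatrix n n), Graphic M → MixedFree d M →
      ∀ (s : ℕ) (D : Division n n s), D.Symm →
        (mixedCompression M D).chromaticNumber ≤ (C : ℕ∞) := by
  classical
  refine ⟨marcusTardosConst d + 1, fun n M hM hfree s D hD =>
    SimpleGraph.Colorable.chromaticNumber_le ?_⟩
  refine colorable_of_forall_exists_degree_le fun S hS => exists_le_of_sum_le hS ?_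
  have hadj : ∀ i j, (mixedCompression M D).Adj i j → mixedZoneMatrix M D i j := by
    intro i j hij
    rw [mixedCompression, SimpleGraph.fromRel_adj] at hij
    simpa [mixedZoneMatrix] using hij.2.elim id (·.symm hM.1 hD)
  calc ∑ v ∈ S, #{w ∈ S | (mixedCompression M D).Adj v w}
      ≤ ∑ v ∈ S, #{w ∈ S | mixedZoneMatrix M D v w} :=
        sum_le_sum fun v _ => card_le_card (monotone_filter_right _ fun w _ => hadj v w)
    _ ≤ marcusTardosConst d * #S :=
        sum_card_filter_le_of_not_hasGrid hd (not_hasGrid_mixedZoneMatrix hfree D) S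
    _ = ∑ _v ∈ S, marcusTardosConst d := by simp [mul_comm]

end TwPaper
end

section
/- A {0,1}-matrix M is mixed if and only if M contains a corner, that is, a 2×2 contiguous submatrix (formed by two consecutive rows and two consecutive columns of M) that is mixed. -/
namespace TwPaper


/-- The `2 × 2` contiguous submatrix of `M` whose top-left entry is `(i, j)`. -/
def cornerAt {m n : ℕ} (M : BMatrix m n) (i j : ℕ)
    (hi : i + 1 < m) (hj : j + 1 < n) : BMatrix 2 2 :=
  fun a b => M ⟨i + a.1, by have := a.2; omega⟩ ⟨j + b.1, by have := b.2; omega⟩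


private lemma chain_const {n : ℕ} (f : ℕ → Bool) (h : ∀ k, k + 1 < n → f k = f (k+1)) :
    ∀ a, a < n → f a = f 0 := by
  intro a
  induction a with
  | zero => intro _; rfl
  | succ k ih => intro h'; rw [← h k (by omega)]; exact ih (by omega)

private lemma prop_chain (Q : ℕ → Prop) (m r : ℕ) (hr : r < m) (hQ : Q r)
    (step : ∀ i, i + 1 < m → (Q i ↔ Q (i+1))) : ∀ a, a < m → Q a := by
  have up : ∀ k, r + k < m → Q (r + k) := by
    intro k
    induction k with
    | zero => intro _; simpa using hQ
    | succ k ih =>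
      intro h
      have h1 := ih (by omega)
      have h2 := (step (r + k) (by omega)).mp h1
      rwa [show r + k + 1 = r + (k+1) by omega] at h2
  have down : ∀ k, Q (r - k) := by
    intro k
    induction k with
    | zero => simpa using hQ
    | succ k ih =>
      by_cases hk : k < r
      · have e : r - (k+1) + 1 = r - k := by omega
        exact (step (r - (k+1)) (by omega)).mpr (by rw [e]; exact ih)
      · have e : r - (k+1) = r - k := by omega
        rw [e]; exact ih
  intro a ha
  rcases le_or_gt r a with h | h
  · have := up (a - r) (by omega); rwa [show r + (a - r) = a by omega] at this
  · have := down (r - a); rwa [show r - (r - a) = a by omega] at this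

private lemma flaw {n : ℕ} (g : Fin n → Bool) (j j' : Fin n) (hne : g j ≠ g j') :
    ∃ c : ℕ, ∃ hc : c + 1 < n, g ⟨c, by omega⟩ ≠ g ⟨c + 1, hc⟩ := by
  by_contra hcon
  push_neg at hcon
  apply hne
  classical
  set f : ℕ → Bool := fun k => if h : k < n then g ⟨k, h⟩ else true with hf
  have hstep : ∀ k, k + 1 < n → f k = f (k+1) := by
    intro k hk
    simp only [hf, dif_pos (show k < n by omega), dif_pos hk]
    exact hcon k hk
  have h1 := chain_const f hstep j.1 j.2
  have h2 := chain_const f hstep j'.1 j'.2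
  have h3 : f j.1 = f j'.1 := h1.trans h2.symm
  simpa [hf, dif_pos j.2, dif_pos j'.2] using h3

private lemma two_mixed (N : BMatrix 2 2) :
    Mixed N Set.univ Set.univ ↔
      (¬(N 0 0 = N 0 1 ∧ N 1 0 = N 1 1) ∧ ¬(N 0 0 = N 1 0 ∧ N 0 1 = N 1 1)) := by
  unfold Mixed Horizontal Vertical
  constructor
  · rintro ⟨h1, h2⟩
    constructor
    · rintro ⟨a, b⟩
      exact h1 (by intro i _ u _ v _; fin_cases i <;> fin_cases u <;> fin_cases v <;> simp_all)
    · rintro ⟨a, b⟩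
      exact h2 (by intro u _ i _ i' _; fin_cases u <;> fin_cases i <;> fin_cases i' <;> simp_all)
  · rintro ⟨h1, h2⟩
    constructor
    · intro h
      exact h1 ⟨h 0 trivial 0 trivial 1 trivial, h 1 trivial 0 trivial 1 trivial⟩
    · intro h
      exact h2 ⟨h 0 trivial 0 trivial 1 trivial, h 1 trivial 0 trivial 1 trivial⟩

/-- A `{0,1}`-matrix `M` is mixed if and only if `M` contains a
corner: a mixed `2 × 2` contiguous submatrix (formed by two consecutive rows and two
consecutive columns of `M`). -/
theorem mixed_iff_corner {m n : ℕ} (M : BMatrix m n) :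
    Mixed M Set.univ Set.univ ↔
      ∃ (i j : ℕ) (hi : i + 1 < m) (hj : j + 1 < n),
        Mixed (cornerAt M i j hi hj) Set.univ Set.univ := by
  constructor
  · rintro ⟨hH, hV⟩
    by_contra hC
    push_neg at hC
    -- extract a horizontal flaw: a row r with consecutive differing columns c, c+1
    have hH' : ∃ (r : Fin m) (c : ℕ) (hc2 : c + 1 < n),
        M r ⟨c, by omega⟩ ≠ M r ⟨c + 1, hc2⟩ := by
      unfold Horizontal at hH
      push_neg at hH
      obtain ⟨r, -, u, -, v, -, huv⟩ := hH
      obtain ⟨c, hc2, hne⟩ := flaw (fun b => M r b) u v huv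
      exact ⟨r, c, hc2, hne⟩
    obtain ⟨r, c, hc2, hflawH⟩ := hH'
    -- extract a vertical flaw: a column cl with consecutive differing rows r', r'+1
    have hV' : ∃ (cl : Fin n) (r' : ℕ) (hr2 : r' + 1 < m),
        M ⟨r', by omega⟩ cl ≠ M ⟨r' + 1, hr2⟩ cl := by
      unfold Vertical at hV
      push_neg at hV
      obtain ⟨cl, -, u, -, v, -, huv⟩ := hV
      obtain ⟨r', hr2, hne⟩ := flaw (fun a => M a cl) u v huv
      exact ⟨cl, r', hr2, hne⟩
    obtain ⟨cl, r', hr2, hflawV⟩ := hV'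
    -- each corner is horizontal or vertical
    have corner : ∀ (i j : ℕ) (hi : i + 1 < m) (hj : j + 1 < n),
        (M ⟨i, by omega⟩ ⟨j, by omega⟩ = M ⟨i, by omega⟩ ⟨j+1, hj⟩ ∧
         M ⟨i+1, hi⟩ ⟨j, by omega⟩ = M ⟨i+1, hi⟩ ⟨j+1, hj⟩) ∨
        (M ⟨i, by omega⟩ ⟨j, by omega⟩ = M ⟨i+1, hi⟩ ⟨j, by omega⟩ ∧
         M ⟨i, by omega⟩ ⟨j+1, hj⟩ = M ⟨i+1, hi⟩ ⟨j+1, hj⟩) := by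
      intro i j hi hj
      have h := hC i j hi hj
      rw [two_mixed] at h
      have e00 : cornerAt M i j hi hj 0 0 = M ⟨i, by omega⟩ ⟨j, by omega⟩ := rfl
      have e01 : cornerAt M i j hi hj 0 1 = M ⟨i, by omega⟩ ⟨j+1, hj⟩ := rfl
      have e10 : cornerAt M i j hi hj 1 0 = M ⟨i+1, hi⟩ ⟨j, by omega⟩ := rfl
      have e11 : cornerAt M i j hi hj 1 1 = M ⟨i+1, hi⟩ ⟨j+1, hj⟩ := rfl
      rw [e00, e01, e10, e11] at h
      tauto
    -- propagate the horizontal flaw to every row (columns c, c+1)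
    have Qall : ∀ a, ∀ h : a < m,
        M ⟨a, h⟩ ⟨c, by omega⟩ = M r ⟨c, by omega⟩ ∧
        M ⟨a, h⟩ ⟨c + 1, hc2⟩ = M r ⟨c + 1, hc2⟩ := by
      have := prop_chain
        (fun a => ∃ h : a < m,
          M ⟨a, h⟩ ⟨c, by omega⟩ = M r ⟨c, by omega⟩ ∧
          M ⟨a, h⟩ ⟨c + 1, hc2⟩ = M r ⟨c + 1, hc2⟩)
        m r.1 r.2 ⟨r.2, by simp⟩
        (by
          intro i hi
          constructor
          · rintro ⟨h, h1, h2⟩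
            rcases corner i c hi hc2 with ⟨a1, a2⟩ | ⟨b1, b2⟩
            · exact absurd (h1.symm.trans (a1.trans h2)) hflawH
            · exact ⟨hi, b1.symm.trans h1, b2.symm.trans h2⟩
          · rintro ⟨h, h1, h2⟩
            rcases corner i c hi hc2 with ⟨a1, a2⟩ | ⟨b1, b2⟩
            · exact absurd (h1.symm.trans (a2.trans h2)) hflawH
            · exact ⟨by omega, b1.trans h1, b2.trans h2⟩)
      intro a h
      obtain ⟨h', h1, h2⟩ := this a h
      exact ⟨h1, h2⟩
    -- propagate the vertical flaw to every column (rows r', r'+1)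
    have Q2all : ∀ b, ∀ h : b < n,
        M ⟨r', by omega⟩ ⟨b, h⟩ = M ⟨r', by omega⟩ cl ∧
        M ⟨r' + 1, hr2⟩ ⟨b, h⟩ = M ⟨r' + 1, hr2⟩ cl := by
      have := prop_chain
        (fun b => ∃ h : b < n,
          M ⟨r', by omega⟩ ⟨b, h⟩ = M ⟨r', by omega⟩ cl ∧
          M ⟨r' + 1, hr2⟩ ⟨b, h⟩ = M ⟨r' + 1, hr2⟩ cl)
        n cl.1 cl.2 ⟨cl.2, by simp⟩
        (by
          intro j hj
          constructor
          · rintro ⟨h, h1, h2⟩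
            rcases corner r' j hr2 hj with ⟨a1, a2⟩ | ⟨b1, b2⟩
            · exact ⟨hj, a1.symm.trans h1, a2.symm.trans h2⟩
            · exact absurd (h1.symm.trans (b1.trans h2)) hflawV
          · rintro ⟨h, h1, h2⟩
            rcases corner r' j hr2 hj with ⟨a1, a2⟩ | ⟨b1, b2⟩
            · exact ⟨by omega, a1.trans h1, a2.trans h2⟩
            · exact absurd (h1.symm.trans (b2.trans h2)) hflawV)
      intro b h
      obtain ⟨h', h1, h2⟩ := this b h
      exact ⟨h1, h2⟩
    -- combine to contradict the horizontal flaw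
    have hA := (Qall r' (by omega)).1           -- M r' c = M r c
    have hB := (Qall r' (by omega)).2           -- M r' (c+1) = M r (c+1)
    have hD := (Q2all c (by omega)).1           -- M r' c = M r' cl
    have hE := (Q2all (c+1) hc2).1              -- M r' (c+1) = M r' cl
    exact hflawH (hA.symm.trans (hD.trans (hE.symm.trans hB)))
  · rintro ⟨i, j, hi, hj, hcH, hcV⟩
    constructor
    · intro h
      exact hcH (by
        intro a _ b _ b' _
        exact h ⟨i + a.1, by have := a.2; omega⟩ trivial
          ⟨j + b.1, by have := b.2; omega⟩ trivial ⟨j + b'.1, by have := b'.2; omega⟩ trivial)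
    · intro h
      exact hcV (by
        intro b _ a _ a' _
        exact h ⟨j + b.1, by have := b.2; omega⟩ trivial
          ⟨i + a.1, by have := a.2; omega⟩ trivial ⟨i + a'.1, by have := a'.2; omega⟩ trivial)


end TwPaper
end

section
/- Let G be a finite simple graph that admits, under some linear ordering of its vertices, a 2-almost mixed-free adjacency matrix. Then G is a cograph, i.e., G contains no induced subgraph isomorphic to the path P₄ on 4 vertices. -/
namespace TwPaper


-- auxiliary lemmas

lemma mixed_of_witnesses {m n : ℕ} {M : BMatrix m n} {R : Set (Fin m)} {C : Set (Fin n)}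
    {i i' : Fin m} {j j' : Fin n}
    (hi : i ∈ R) (hi' : i' ∈ R) (hj : j ∈ C) (hj' : j' ∈ C)
    (hH : M i j ≠ M i j' ∨ M i' j ≠ M i' j')
    (hV : M i j ≠ M i' j ∨ M i j' ≠ M i' j') : Mixed M R C := by
  constructor
  · intro h
    rcases hH with h1 | h1
    · exact h1 (h i hi j hj j' hj')
    · exact h1 (h i' hi' j hj j' hj')
  · intro h
    rcases hV with h1 | h1
    · exact h1 (h j hj i hi i' hi')
    · exact h1 (h j' hj' i hi i' hi')

lemma mixed_symm {n : ℕ} {M : BMatrix n n} (hsymm : ∀ i j, M i j = M j i)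
    {R C : Set (Fin n)} (h : Mixed M R C) : Mixed M C R := by
  obtain ⟨hH, hV⟩ := h
  constructor
  · intro h'
    exact hV (fun j hj i hi i' hi' => by rw [hsymm i j, hsymm i' j]; exact h' j hj i hi i' hi')
  · intro h'
    exact hH (fun i hi j hj j' hj' => by rw [hsymm i j, hsymm i j']; exact h' i hi j hj j' hj')

def splitDiv {n : ℕ} (t p : Fin n) (hpt : p < t) : Division n n 2 where
  row := fun i => if i < t then 0 else 1
  col := fun i => if i < t then 0 else 1
  row_mono := by
    intro a b hab
    dsimp only
    split_ifs with h1 h2 h2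
    · exact le_refl _
    · exact Fin.zero_le _
    · exact absurd (lt_of_le_of_lt hab h2) h1
    · exact le_refl _
  col_mono := by
    intro a b hab
    dsimp only
    split_ifs with h1 h2 h2
    · exact le_refl _
    · exact Fin.zero_le _
    · exact absurd (lt_of_le_of_lt hab h2) h1
    · exact le_refl _
  row_surj := by
    intro k
    fin_cases k
    · exact ⟨p, by simp [hpt]⟩
    · exact ⟨t, by simp⟩
  col_surj := by
    intro k
    fin_cases k
    · exact ⟨p, by simp [hpt]⟩
    · exact ⟨t, by simp⟩

lemma splitDiv_rowBlock0 {n : ℕ} (t p : Fin n) (hpt : p < t) :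
    (splitDiv t p hpt).rowBlock 0 = {a | a < t} := by
  ext a
  simp only [Division.rowBlock, splitDiv, Set.mem_setOf_eq]
  split_ifs with h <;> simp [h]

lemma splitDiv_rowBlock1 {n : ℕ} (t p : Fin n) (hpt : p < t) :
    (splitDiv t p hpt).rowBlock 1 = {a | ¬ a < t} := by
  ext a
  simp only [Division.rowBlock, splitDiv, Set.mem_setOf_eq]
  split_ifs with h <;> simp [h]

lemma splitDiv_colBlock0 {n : ℕ} (t p : Fin n) (hpt : p < t) :
    (splitDiv t p hpt).colBlock 0 = {a | a < t} := by
  ext a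
  simp only [Division.colBlock, splitDiv, Set.mem_setOf_eq]
  split_ifs with h <;> simp [h]

lemma splitDiv_colBlock1 {n : ℕ} (t p : Fin n) (hpt : p < t) :
    (splitDiv t p hpt).colBlock 1 = {a | ¬ a < t} := by
  ext a
  simp only [Division.colBlock, splitDiv, Set.mem_setOf_eq]
  split_ifs with h <;> simp [h]

lemma key {n : ℕ} (M : BMatrix n n) (hsymm : ∀ i j, M i j = M j i)
    (w x y z : Fin n)
    (hwx : w ≠ x) (hwy : w ≠ y) (hwz : w ≠ z) (hxy : x ≠ y) (hxz : x ≠ z) (hyz : y ≠ z)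
    (awx : M w x = true) (axy : M x y = true) (ayz : M y z = true)
    (awy : M w y = false) (awz : M w z = false) (axz : M x z = false) :
    ∃ D : Division n n 2, IsAlmostMixedMinor M D := by
  classical
  set S : Finset (Fin n) := {w, x, y, z} with hSdef
  have hS : S.card = 4 := by
    rw [hSdef]
    rw [Finset.card_insert_of_notMem (by simp [hwx, hwy, hwz]),
        Finset.card_insert_of_notMem (by simp [hxy, hxz]),
        Finset.card_insert_of_notMem (by simp [hyz]), Finset.card_singleton]
  have hex : ∃ p q r s : Fin n, p < q ∧ q < r ∧ r < s ∧
      ∀ v ∈ S, v = p ∨ v = q ∨ v = r ∨ v = s := by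
    refine ⟨S.orderEmbOfFin hS 0, S.orderEmbOfFin hS 1, S.orderEmbOfFin hS 2,
      S.orderEmbOfFin hS 3, (S.orderEmbOfFin hS).strictMono (by decide),
      (S.orderEmbOfFin hS).strictMono (by decide),
      (S.orderEmbOfFin hS).strictMono (by decide), ?_⟩
    intro v hv
    have : v ∈ Set.range (S.orderEmbOfFin hS) := by
      rw [Finset.range_orderEmbOfFin]; exact hv
    obtain ⟨i, hi⟩ := this
    fin_cases i
    · exact Or.inl hi.symm
    · exact Or.inr (Or.inl hi.symm)
    · exact Or.inr (Or.inr (Or.inl hi.symm))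
    · exact Or.inr (Or.inr (Or.inr hi.symm))
  obtain ⟨p, q, r, s, hpq, hqr, hrs, hmem⟩ := hex
  have hw4 := hmem w (by simp [hSdef])
  have hx4 := hmem x (by simp [hSdef])
  have hy4 := hmem y (by simp [hSdef])
  have hz4 := hmem z (by simp [hSdef])
  -- the division at threshold r
  refine ⟨splitDiv r p (lt_trans hpq hqr), ?_⟩
  have hzone : Mixed M {a | a < r} {a | ¬ a < r} := by
    have hpR : p ∈ {a | a < r} := lt_trans hpq hqr
    have hqR : q ∈ {a | a < r} := hqr
    have hrC : r ∈ {a | ¬ a < r} := lt_irrefl r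
    have hsC : s ∈ {a | ¬ a < r} := not_lt_of_gt hrs
    rcases hw4 with rfl | rfl | rfl | rfl <;>
      rcases hx4 with rfl | rfl | rfl | rfl <;>
      rcases hy4 with rfl | rfl | rfl | rfl <;>
      rcases hz4 with rfl | rfl | rfl | rfl <;>
      first
        | exact absurd rfl hwx
        | exact absurd rfl hwy
        | exact absurd rfl hwz
        | exact absurd rfl hxy
        | exact absurd rfl hxz
        | exact absurd rfl hyz
        | (exact mixed_of_witnesses hpR hqR hrC hsC
            (by simp_all) (by simp_all))
  intro i j hij
  have hzone' : Mixed M {a | ¬ a < r} {a | a < r} := mixed_symm hsymm hzone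
  fin_cases i <;> fin_cases j <;> simp_all [Division.ZoneMixed,
    splitDiv_rowBlock0, splitDiv_rowBlock1, splitDiv_colBlock0, splitDiv_colBlock1]

/-- Every finite simple graph admitting, under some linear ordering
of its vertices, a `2`-almost mixed-free adjacency matrix is a cograph: it contains no
induced subgraph isomorphic to the path `P₄` on `4` vertices. -/
theorem amfree_two_cograph {V : Type} [Fintype V] (G : SimpleGraph V)
    (h : AdmitsAMFree 2 G) :
    ¬ Nonempty ((SimpleGraph.pathGraph 4) ↪g G) := by
  rintro ⟨f⟩
  obtain ⟨e, hfree⟩ := h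
  apply hfree
  have hadj : ∀ u v : Fin 4, adjMatrix G e (e.symm (f u)) (e.symm (f v)) = true ↔
      (SimpleGraph.pathGraph 4).Adj u v := by
    intro u v
    simp [adjMatrix, f.map_adj_iff]
  have hne : ∀ u v : Fin 4, u ≠ v → e.symm (f u) ≠ e.symm (f v) := by
    intro u v huv hc
    exact huv (f.injective (e.symm.injective hc))
  refine key (adjMatrix G e) (fun i j => by simp [adjMatrix, SimpleGraph.adj_comm])
    (e.symm (f 0)) (e.symm (f 1)) (e.symm (f 2)) (e.symm (f 3))
    (hne 0 1 (by decide)) (hne 0 2 (by decide)) (hne 0 3 (by decide))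
    (hne 1 2 (by decide)) (hne 1 3 (by decide)) (hne 2 3 (by decide))
    ?_ ?_ ?_ ?_ ?_ ?_
  · exact (hadj 0 1).mpr (by rw [SimpleGraph.pathGraph_adj]; decide)
  · exact (hadj 1 2).mpr (by rw [SimpleGraph.pathGraph_adj]; decide)
  · exact (hadj 2 3).mpr (by rw [SimpleGraph.pathGraph_adj]; decide)
  · refine Bool.eq_false_iff.mpr (fun hc => ?_)
    have := (hadj 0 2).mp hc
    rw [SimpleGraph.pathGraph_adj] at this
    exact absurd this (by decide)
  · refine Bool.eq_false_iff.mpr (fun hc => ?_)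
    have := (hadj 0 3).mp hc
    rw [SimpleGraph.pathGraph_adj] at this
    exact absurd this (by decide)
  · refine Bool.eq_false_iff.mpr (fun hc => ?_)
    have := (hadj 1 3).mp hc
    rw [SimpleGraph.pathGraph_adj] at this
    exact absurd this (by decide)


end TwPaper
end
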